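/- arXiv:2202.05540 — 11 statements merged into one kernel-verified Lean document; each statement's English description precedes it below -/
import Mathlib

section
/- Suppose F¹ ∈ 𝓕_{K₁}^in, Q¹ ∈ 𝓠_{K₁}^an, F² ∈ 𝓕_{K₂}^in, Q² ∈ 𝓠_{K₂}^an and the matrix products satisfy F¹Q¹ = F²Q². Then (F¹,Q¹) ∼ (F²,Q²); in particular K₁ = K₂ and the columns of F² are a permutation of the columns of F¹, with the rows of Q² permuted by the same permutation. -/
open Matrix BigOperators

/-- `F ∈ 𝓕_K`: real `M × K` matrix with entries in `[0,1]`. -/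
def memF {M K : ℕ} (F : Matrix (Fin M) (Fin K) ℝ) : Prop :=
  ∀ s k, 0 ≤ F s k ∧ F s k ≤ 1

/-- `Q ∈ 𝓠_K`: real `K × N` matrix with nonnegative entries whose columns sum to 1. -/
def memQ {K N : ℕ} (Q : Matrix (Fin K) (Fin N) ℝ) : Prop :=
  (∀ k i, 0 ≤ Q k i) ∧ ∀ i, ∑ k, Q k i = 1

/-- The standard basis vector `e_k` occurs as a column of `Q`. -/
def isColE {K N : ℕ} (Q : Matrix (Fin K) (Fin N) ℝ) (k : Fin K) : Prop :=
  ∃ i, ∀ l, Q l i = if l = k then (1 : ℝ) else 0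

/-- `Q ∈ 𝓠_K^an`: anchor condition on `Q`. -/
def memQan {K N : ℕ} (Q : Matrix (Fin K) (Fin N) ℝ) : Prop :=
  memQ Q ∧ ∀ k, isColE Q k

/-- The `K-1` column differences `F_{⋆1}−F_{⋆K}, …, F_{⋆(K−1)}−F_{⋆K}` are
linearly independent (stated for every proof of `0 < K`). -/
def colDiffIndep {M K : ℕ} (F : Matrix (Fin M) (Fin K) ℝ) : Prop :=
  ∀ hK : 0 < K, LinearIndependent ℝ (fun j : Fin (K - 1) =>
    (fun s => F s (Fin.castLE (Nat.sub_le K 1) j) - F s ⟨K - 1, Nat.sub_lt hK Nat.one_pos⟩ :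
      Fin M → ℝ))

/-- `F ∈ 𝓕_K^in`. -/
def memFin {M K : ℕ} (F : Matrix (Fin M) (Fin K) ℝ) : Prop :=
  memF F ∧ colDiffIndep F

/-- `F ∈ 𝓕_K^an`: anchor condition on `F`. -/
def memFan {M K : ℕ} (F : Matrix (Fin M) (Fin K) ℝ) : Prop :=
  memF F ∧ ∀ k, ∃ s, 0 < F s k ∧ ∀ l, l ≠ k → F s l = 0

/-- `Q ∈ 𝓠_K^in`: the rows of `Q` are linearly independent. -/
def memQin {K N : ℕ} (Q : Matrix (Fin K) (Fin N) ℝ) : Prop :=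
  memQ Q ∧ LinearIndependent ℝ (fun k : Fin K => Q k)

/-- `F ∈ 𝓕_K^d`: the columns of `F` are mutually distinct. -/
def memFd {M K : ℕ} (F : Matrix (Fin M) (Fin K) ℝ) : Prop :=
  memF F ∧ ∀ k l : Fin K, (∀ s, F s k = F s l) → k = l

/-- `Q ∈ 𝓠_K^ua`: every column of `Q` is a standard basis vector, and every
standard basis vector occurs as a column. -/
def memQua {K N : ℕ} (Q : Matrix (Fin K) (Fin N) ℝ) : Prop :=
  memQ Q ∧ (∀ i, ∃ k, ∀ l, Q l i = if l = k then (1 : ℝ) else 0) ∧ ∀ k, isColE Q k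

/-- `(F¹,Q¹) ∼ (F²,Q²)`: there is a bijection (permutation) `π` with
`F²_{⋆k} = F¹_{⋆π(k)}` and `Q²_{k⋆} = Q¹_{π(k)⋆}` for every `k`. -/
def MEquiv {M N K₁ K₂ : ℕ} (F1 : Matrix (Fin M) (Fin K₁) ℝ) (Q1 : Matrix (Fin K₁) (Fin N) ℝ)
    (F2 : Matrix (Fin M) (Fin K₂) ℝ) (Q2 : Matrix (Fin K₂) (Fin N) ℝ) : Prop :=
  ∃ π : Fin K₂ → Fin K₁, Function.Bijective π ∧
    (∀ k s, F2 s k = F1 s (π k)) ∧ (∀ k i, Q2 k i = Q1 (π k) i)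

/-- `co(F)`: convex hull of the columns of `F` in `ℝ^M`. -/
def coCols {M K : ℕ} (F : Matrix (Fin M) (Fin K) ℝ) : Set (Fin M → ℝ) :=
  convexHull ℝ {v | ∃ k, v = fun s => F s k}

/-- `cone(Q)`: all nonnegative linear combinations of the rows of `Q` in `ℝ^N`. -/
def coneRows {K N : ℕ} (Q : Matrix (Fin K) (Fin N) ℝ) : Set (Fin N → ℝ) :=
  {x | ∃ c : Fin K → ℝ, (∀ k, 0 ≤ c k) ∧ x = ∑ k, c k • Q k}

/-- A model is identifiable if equality of the products implies equivalence. -/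
def Identifiable {M N : ℕ}
    (𝓜 : ∀ K : ℕ, Set (Matrix (Fin M) (Fin K) ℝ × Matrix (Fin K) (Fin N) ℝ)) : Prop :=
  ∀ (K₁ K₂ : ℕ) (F1 : Matrix (Fin M) (Fin K₁) ℝ) (Q1 : Matrix (Fin K₁) (Fin N) ℝ)
    (F2 : Matrix (Fin M) (Fin K₂) ℝ) (Q2 : Matrix (Fin K₂) (Fin N) ℝ),
    (F1, Q1) ∈ 𝓜 K₁ → (F2, Q2) ∈ 𝓜 K₂ → F1 * Q1 = F2 * Q2 → MEquiv F1 Q1 F2 Q2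

/-- The set of indices `k` such that some row of `F` equals `δ_k · e_kᵀ` with `δ_k > 0`. -/
def anchorRows {M K : ℕ} (F : Matrix (Fin M) (Fin K) ℝ) : Set (Fin K) :=
  {k | ∃ (s : Fin M) (d : ℝ), 0 < d ∧ ∀ l, F s l = if l = k then d else 0}

/-- Kernel characterization of column-difference independence: a vector `c` with
`∑ c = 0` annihilated by the columns of `F` must vanish. -/
lemma ker_of_colDiffIndep {M K : ℕ} {F : Matrix (Fin M) (Fin K) ℝ}
    (h : colDiffIndep F) (hK : 0 < K) (c : Fin K → ℝ)
    (hc0 : ∑ k, c k = 0) (hFc : ∀ s, ∑ k, c k * F s k = 0) :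
    ∀ k, c k = 0 := by
  obtain ⟨K', rfl⟩ : ∃ K', K = K' + 1 := ⟨K - 1, (Nat.succ_pred_eq_of_pos hK).symm⟩
  have hli : LinearIndependent ℝ (fun j : Fin K' =>
      (fun s => F s j.castSucc - F s (Fin.last K') : Fin M → ℝ)) := h hK
  rw [Fintype.linearIndependent_iff] at hli
  have hsum : ∀ s, ∑ j : Fin K', c j.castSucc * F s j.castSucc + c (Fin.last K') * F s (Fin.last K') = 0 := by
    intro s
    have := hFc s
    rwa [Fin.sum_univ_castSucc] at this
  have hc0' : ∑ j : Fin K', c j.castSucc + c (Fin.last K') = 0 := by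
    have := hc0; rwa [Fin.sum_univ_castSucc] at this
  have key := hli (fun j => c j.castSucc) ?_
  · intro k
    refine Fin.lastCases ?_ (fun j => key j) k
    have : ∑ j : Fin K', c j.castSucc = 0 := Finset.sum_eq_zero fun j _ => key j
    linarith [hc0']
  · funext s
    simp only [Finset.sum_apply, Pi.smul_apply, smul_eq_mul, mul_sub]
    rw [Finset.sum_sub_distrib, ← Finset.sum_mul]
    have h1 := hsum s
    have h2 : ∑ j : Fin K', c j.castSucc = -c (Fin.last K') := by linarith [hc0']
    rw [h2]
    simp only [Pi.zero_apply]
    linarith [h1]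

/-- Cancellation: if `F` has independent column differences and `G`, `H` have equal
column sums with `F * G = F * H`, then `G = H`. -/
lemma cancel_of_colDiffIndep {M K N' : ℕ} {F : Matrix (Fin M) (Fin K) ℝ}
    (h : colDiffIndep F) (hK : 0 < K) {G H : Matrix (Fin K) (Fin N') ℝ}
    (hsum : ∀ i, ∑ k, G k i = ∑ k, H k i) (hFG : F * G = F * H) : G = H := by
  ext k i
  have key := ker_of_colDiffIndep h hK (fun k => G k i - H k i) ?_ ?_ k
  · linarith [key]
  · rw [Finset.sum_sub_distrib, hsum i]; ring
  · intro s
    have := congrFun (congrFun hFG s) i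
    rw [Matrix.mul_apply, Matrix.mul_apply] at this
    have : ∑ l, (F s l * G l i - F s l * H l i) = 0 := by
      rw [Finset.sum_sub_distrib, this]; ring
    rw [← this]
    apply Finset.sum_congr rfl
    intro l _
    ring

/-- if `F¹ ∈ 𝓕_{K₁}^in`, `Q¹ ∈ 𝓠_{K₁}^an`, `F² ∈ 𝓕_{K₂}^in`, `Q² ∈ 𝓠_{K₂}^an`
and `F¹Q¹ = F²Q²`, then `K₁ = K₂` and `(F¹,Q¹) ∼ (F²,Q²)`. -/
theorem stmt0 {M N K₁ K₂ : ℕ} (hM : 1 ≤ M) (hN : 1 ≤ N) (hK₁ : 1 ≤ K₁) (hK₂ : 1 ≤ K₂)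
    (F1 : Matrix (Fin M) (Fin K₁) ℝ) (Q1 : Matrix (Fin K₁) (Fin N) ℝ)
    (F2 : Matrix (Fin M) (Fin K₂) ℝ) (Q2 : Matrix (Fin K₂) (Fin N) ℝ)
    (hF1 : memFin F1) (hQ1 : memQan Q1) (hF2 : memFin F2) (hQ2 : memQan Q2)
    (hprod : F1 * Q1 = F2 * Q2) :
    K₁ = K₂ ∧ MEquiv F1 Q1 F2 Q2 := by
  classical
  have hK₁' : 0 < K₁ := hK₁
  have hK₂' : 0 < K₂ := hK₂
  obtain ⟨hQ1mem, hQ1an⟩ := hQ1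
  obtain ⟨hQ2mem, hQ2an⟩ := hQ2
  choose i1 hi1 using hQ1an
  choose j2 hj2 using hQ2an
  set A : Matrix (Fin K₂) (Fin K₁) ℝ := fun l k => Q2 l (i1 k) with hAdef
  set B : Matrix (Fin K₁) (Fin K₂) ℝ := fun l k => Q1 l (j2 k) with hBdef
  have hAnn : ∀ l k, 0 ≤ A l k := fun l k => hQ2mem.1 l (i1 k)
  have hBnn : ∀ l k, 0 ≤ B l k := fun l k => hQ1mem.1 l (j2 k)
  have hAsum : ∀ k, ∑ l, A l k = 1 := fun k => hQ2mem.2 (i1 k)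
  have hBsum : ∀ k, ∑ l, B l k = 1 := fun k => hQ1mem.2 (j2 k)
  -- F1 = F2 * A
  have hF1eq : F1 = F2 * A := by
    ext s k
    have h1 : (F1 * Q1) s (i1 k) = (F2 * Q2) s (i1 k) := by rw [hprod]
    rw [Matrix.mul_apply, Matrix.mul_apply] at h1
    have h2 : ∑ l, F1 s l * Q1 l (i1 k) = F1 s k := by
      rw [show (∑ l, F1 s l * Q1 l (i1 k)) = ∑ l, F1 s l * (if l = k then (1:ℝ) else 0) from
        Finset.sum_congr rfl (fun l _ => by rw [hi1 k l])]
      simp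
    rw [h2] at h1
    rw [Matrix.mul_apply]
    exact h1
  -- F2 = F1 * B
  have hF2eq : F2 = F1 * B := by
    ext s k
    have h1 : (F1 * Q1) s (j2 k) = (F2 * Q2) s (j2 k) := by rw [hprod]
    rw [Matrix.mul_apply, Matrix.mul_apply] at h1
    have h2 : ∑ l, F2 s l * Q2 l (j2 k) = F2 s k := by
      rw [show (∑ l, F2 s l * Q2 l (j2 k)) = ∑ l, F2 s l * (if l = k then (1:ℝ) else 0) from
        Finset.sum_congr rfl (fun l _ => by rw [hj2 k l])]
      simp
    rw [h2] at h1
    rw [Matrix.mul_apply]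
    exact h1.symm
  -- column sums of products
  have hBAsum : ∀ k, ∑ l, (B * A) l k = 1 := by
    intro k
    simp only [Matrix.mul_apply]
    rw [Finset.sum_comm]
    calc ∑ m, ∑ l, B l m * A m k = ∑ m, (∑ l, B l m) * A m k := by
          simp [Finset.sum_mul]
      _ = ∑ m, A m k := by
          apply Finset.sum_congr rfl; intro m _; rw [hBsum m, one_mul]
      _ = 1 := hAsum k
  have hABsum : ∀ k, ∑ l, (A * B) l k = 1 := by
    intro k
    simp only [Matrix.mul_apply]
    rw [Finset.sum_comm]
    calc ∑ m, ∑ l, A l m * B m k = ∑ m, (∑ l, A l m) * B m k := by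
          simp [Finset.sum_mul]
      _ = ∑ m, B m k := by
          apply Finset.sum_congr rfl; intro m _; rw [hAsum m, one_mul]
      _ = 1 := hBsum k
  have honesum : ∀ {K : ℕ} (k : Fin K), ∑ l, (1 : Matrix (Fin K) (Fin K) ℝ) l k = 1 := by
    intro K k
    simp [Matrix.one_apply]
  -- B * A = 1
  have hBA : B * A = 1 := by
    apply cancel_of_colDiffIndep hF1.2 hK₁'
    · intro i; rw [hBAsum i, honesum i]
    · rw [Matrix.mul_one, ← Matrix.mul_assoc, ← hF2eq, ← hF1eq]
  -- A * B = 1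
  have hAB : A * B = 1 := by
    apply cancel_of_colDiffIndep hF2.2 hK₂'
    · intro i; rw [hABsum i, honesum i]
    · rw [Matrix.mul_one, ← Matrix.mul_assoc, ← hF1eq, ← hF2eq]
  -- K₁ = K₂ via trace
  have hKK : K₁ = K₂ := by
    have h1 : Matrix.trace (B * A) = Matrix.trace (A * B) := Matrix.trace_mul_comm B A
    rw [hBA, hAB, Matrix.trace_one, Matrix.trace_one] at h1
    have h2 : Fintype.card (Fin K₁) = Fintype.card (Fin K₂) := by exact_mod_cast h1
    simpa using h2
  subst hKK
  refine ⟨rfl, ?_⟩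
  -- extract permutation from B
  have hcol : ∀ k, ∃ l, 0 < B l k := by
    intro k
    by_contra hcon
    push_neg at hcon
    have : ∑ l, B l k = 0 :=
      Finset.sum_eq_zero (fun l _ => le_antisymm (hcon l) (hBnn l k))
    rw [hBsum k] at this
    norm_num at this
  choose π hπ using hcol
  -- off-diagonal entries of A in column π k vanish
  have hAoff : ∀ k m, m ≠ k → A m (π k) = 0 := by
    intro k m hm
    have h1 : (A * B) m k = 0 := by
      rw [hAB, Matrix.one_apply_ne hm]
    rw [Matrix.mul_apply] at h1
    have h2 : ∀ l ∈ Finset.univ, 0 ≤ A m l * B l k :=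
      fun l _ => mul_nonneg (hAnn m l) (hBnn l k)
    have h3 := (Finset.sum_eq_zero_iff_of_nonneg h2).mp h1 (π k) (Finset.mem_univ _)
    rcases mul_eq_zero.mp h3 with h | h
    · exact h
    · exact absurd h (ne_of_gt (hπ k))
  have hAdiag : ∀ k, A k (π k) = 1 := by
    intro k
    have := hAsum (π k)
    rwa [Finset.sum_eq_single k (fun m _ hm => hAoff k m hm) (fun h => absurd (Finset.mem_univ k) h)]
      at this
  -- B's columns are basis vectors
  have hBcol : ∀ k l, B l k = if l = π k then (1:ℝ) else 0 := by
    intro k l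
    have h1 : (B * A) l (π k) = if l = π k then (1:ℝ) else 0 := by
      rw [hBA, Matrix.one_apply]
    rw [Matrix.mul_apply,
      Finset.sum_eq_single k (fun m _ hm => by rw [hAoff k m hm, mul_zero])
        (fun h => absurd (Finset.mem_univ k) h), hAdiag k, mul_one] at h1
    exact h1
  have hπinj : Function.Injective π := by
    intro k k' h
    by_contra hne
    have h2 : A k' (π k) = 0 := hAoff k k' (Ne.symm hne)
    rw [h, hAdiag k'] at h2
    norm_num at h2
  have hπbij : Function.Bijective π := Finite.injective_iff_bijective.mp hπinj
  -- Q1 = B * Q2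
  have hQeq : Q1 = B * Q2 := by
    apply cancel_of_colDiffIndep hF1.2 hK₁'
    · intro i
      have hR : ∑ l, (B * Q2) l i = 1 := by
        simp only [Matrix.mul_apply]
        rw [Finset.sum_comm]
        calc ∑ m, ∑ l, B l m * Q2 m i = ∑ m, (∑ l, B l m) * Q2 m i := by
              simp [Finset.sum_mul]
          _ = ∑ m, Q2 m i := by
              apply Finset.sum_congr rfl; intro m _; rw [hBsum m, one_mul]
          _ = 1 := hQ2mem.2 i
      rw [hQ1mem.2 i, hR]
    · rw [← Matrix.mul_assoc, ← hF2eq, hprod]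
  refine ⟨π, hπbij, ?_, ?_⟩
  · intro k s
    have := congrFun (congrFun hF2eq s) k
    rw [Matrix.mul_apply] at this
    rw [this]
    rw [show (∑ l, F1 s l * B l k) = ∑ l, F1 s l * (if l = π k then (1:ℝ) else 0) from
      Finset.sum_congr rfl (fun l _ => by rw [hBcol k l])]
    simp
  · intro k i
    have := congrFun (congrFun hQeq (π k)) i
    rw [Matrix.mul_apply] at this
    rw [this,
      Finset.sum_eq_single k (fun m _ hm => by
          rw [hBcol m (π k), if_neg (fun hc => hm (hπinj hc.symm)), zero_mul])
        (fun h => absurd (Finset.mem_univ k) h),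
      hBcol k (π k), if_pos rfl, one_mul]
end

section
/- Let K ≥ 2 and N ≥ K+1. Let F ∈ 𝓕_K be such that the vectors F_{⋆1}−F_{⋆K}, …, F_{⋆(K−1)}−F_{⋆K} are linearly dependent (i.e. F ∉ 𝓕_K^in), and let Q ∈ 𝓠_K^an have some column Q_{⋆i} with Q_{ki} > 0 for all k ∈ {1,…,K}. Then there exists Q² ∈ 𝓠_K^an such that FQ = FQ² but (F,Q) is not equivalent to (F,Q²). -/
open Matrix BigOperators

/-- if `F ∈ 𝓕_K ∖ 𝓕_K^in` and `Q ∈ 𝓠_K^an` has a strictly positive column,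
there is `Q² ∈ 𝓠_K^an` with `FQ = FQ²` but `(F,Q) ≁ (F,Q²)`. -/
theorem stmt1 {M N K : ℕ} (hM : 1 ≤ M) (hK : 2 ≤ K) (hN : K + 1 ≤ N)
    (F : Matrix (Fin M) (Fin K) ℝ) (hF : memF F) (hFnotin : ¬ colDiffIndep F)
    (Q : Matrix (Fin K) (Fin N) ℝ) (hQ : memQan Q)
    (i : Fin N) (hi : ∀ k, 0 < Q k i) :
    ∃ Q2 : Matrix (Fin K) (Fin N) ℝ, memQan Q2 ∧ F * Q = F * Q2 ∧ ¬ MEquiv F Q F Q2 := by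
  classical
  have hK0 : 0 < K := by omega
  have hKe : K - 1 + 1 = K := by omega
  set L : Fin K := ⟨K - 1, Nat.sub_lt hK0 Nat.one_pos⟩ with hLdef
  have hdep : ¬ LinearIndependent ℝ (fun j : Fin (K - 1) =>
      (fun s => F s (Fin.castLE (Nat.sub_le K 1) j) - F s L : Fin M → ℝ)) := by
    intro h
    exact hFnotin (fun _ => h)
  rw [Fintype.not_linearIndependent_iff] at hdep
  obtain ⟨g, hg0, j0, hj0⟩ := hdep
  -- the coefficient vector c : affine dependence among the columns of F
  set d : Fin (K - 1 + 1) → ℝ := Fin.snoc g (-∑ j, g j) with hddef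
  set c : Fin K → ℝ := fun k => d (Fin.cast hKe.symm k) with hcdef
  have hc1 : ∀ j : Fin (K - 1), c (Fin.castLE (Nat.sub_le K 1) j) = g j := by
    intro j
    have : Fin.cast hKe.symm (Fin.castLE (Nat.sub_le K 1) j) = Fin.castSucc j :=
      Fin.ext rfl
    simp [hcdef, this, hddef]
  have hc2 : c L = -∑ j, g j := by
    have : Fin.cast hKe.symm L = Fin.last (K - 1) := Fin.ext rfl
    simp [hcdef, this, hddef]
  have hsum_c : ∀ f : Fin K → ℝ, ∑ k, c k * f k =
      (∑ j : Fin (K - 1), g j * f (Fin.castLE (Nat.sub_le K 1) j)) + (-∑ j, g j) * f L := by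
    intro f
    rw [← Fin.sum_congr' (fun k => c k * f k) hKe, Fin.sum_univ_castSucc]
    congr 1
    · refine Finset.sum_congr rfl fun j _ => ?_
      have h1 : Fin.cast hKe (Fin.castSucc j) = Fin.castLE (Nat.sub_le K 1) j := Fin.ext rfl
      rw [h1, hc1]
    · have h2 : Fin.cast hKe (Fin.last (K - 1)) = L := Fin.ext rfl
      rw [h2, hc2]
  have hcsum : ∑ k, c k = 0 := by
    have := hsum_c (fun _ => 1)
    simpa using this
  have hcF : ∀ s, ∑ k, c k * F s k = 0 := by
    intro s
    have h0 := congrFun hg0 s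
    simp only [Finset.sum_apply, Pi.smul_apply, smul_eq_mul, Pi.zero_apply] at h0
    rw [hsum_c (fun k => F s k)]
    have : ∑ j : Fin (K - 1), g j * F s (Fin.castLE (Nat.sub_le K 1) j)
        = ∑ j : Fin (K - 1), (g j * (F s (Fin.castLE (Nat.sub_le K 1) j) - F s L)
          + g j * F s L) := by
      refine Finset.sum_congr rfl fun j _ => ?_; ring
    rw [this, Finset.sum_add_distrib, h0, ← Finset.sum_mul]
    ring
  -- choose ε > 0 small
  have hne : (Finset.univ : Finset (Fin K)).Nonempty := ⟨⟨0, hK0⟩, Finset.mem_univ _⟩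
  set ε : ℝ := Finset.univ.inf' hne (fun k => Q k i / (|c k| + 1)) with hεdef
  have hε : 0 < ε := by
    rw [hεdef, Finset.lt_inf'_iff]
    intro k _
    exact div_pos (hi k) (by positivity)
  have hεk : ∀ k, 0 ≤ Q k i + ε * c k := by
    intro k
    have h1 : ε ≤ Q k i / (|c k| + 1) := Finset.inf'_le _ (Finset.mem_univ k)
    have h2 : ε * (|c k| + 1) ≤ Q k i := (le_div_iff₀ (by positivity)).mp h1
    have h3 : -(c k) ≤ |c k| := neg_le_abs (c k)
    nlinarith [abs_nonneg (c k), hε.le]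
  -- the perturbed matrix
  set Q2 : Matrix (Fin K) (Fin N) ℝ :=
    Matrix.of (fun k j => if j = i then Q k i + ε * c k else Q k j) with hQ2def
  have hQ2app : ∀ k j, Q2 k j = if j = i then Q k i + ε * c k else Q k j := fun k j => rfl
  obtain ⟨⟨hQnn, hQsum⟩, hQan⟩ := hQ
  -- anchor columns of Q avoid column i
  have hanch : ∀ k : Fin K, ∃ j, j ≠ i ∧ ∀ l, Q l j = if l = k then (1 : ℝ) else 0 := by
    intro k
    obtain ⟨jk, hjk⟩ := hQan k
    refine ⟨jk, ?_, hjk⟩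
    intro hji
    obtain ⟨l, hl⟩ : ∃ l : Fin K, l ≠ k := by
      by_cases h0 : k = ⟨0, hK0⟩
      · exact ⟨⟨1, by omega⟩, by simp [h0, Fin.ext_iff]⟩
      · exact ⟨⟨0, hK0⟩, fun h => h0 h.symm⟩
    have := hjk l
    rw [if_neg hl] at this
    rw [hji] at this
    exact absurd this (ne_of_gt (hi l))
  refine ⟨Q2, ⟨⟨?_, ?_⟩, ?_⟩, ?_, ?_⟩
  · -- nonneg
    intro k j
    rw [hQ2app]
    by_cases hj : j = i
    · rw [if_pos hj]; exact hεk k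
    · rw [if_neg hj]; exact hQnn k j
  · -- column sums
    intro j
    by_cases hj : j = i
    · have e1 : ∑ k, Q2 k j = ∑ k, (Q k i + ε * c k) :=
        Finset.sum_congr rfl fun k _ => by rw [hQ2app, if_pos hj]
      rw [e1, Finset.sum_add_distrib, hQsum i, ← Finset.mul_sum, hcsum]
      ring
    · simp only [hQ2app, if_neg hj]
      exact hQsum j
  · -- anchors
    intro k
    obtain ⟨jk, hjki, hjk⟩ := hanch k
    exact ⟨jk, fun l => by rw [hQ2app, if_neg hjki]; exact hjk l⟩
  · -- F * Q = F * Q2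
    ext s j
    by_cases hj : j = i
    · simp only [Matrix.mul_apply]
      have e1 : ∑ k, F s k * Q2 k j = ∑ k, F s k * (Q k i + ε * c k) :=
        Finset.sum_congr rfl fun k _ => by rw [hQ2app, if_pos hj]
      have e2 : ∑ k, F s k * (Q k i + ε * c k)
          = ∑ k, F s k * Q k i + ε * ∑ k, c k * F s k := by
        rw [Finset.mul_sum, ← Finset.sum_add_distrib]
        refine Finset.sum_congr rfl fun k _ => ?_; ring
      rw [e1, e2, hcF s, hj]
      ring
    · simp only [Matrix.mul_apply, hQ2app, if_neg hj]
  · -- not equivalent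
    rintro ⟨π, hbij, hFe, hQe⟩
    have hπ : ∀ k, π k = k := by
      intro k
      obtain ⟨jk, hjki, hjk⟩ := hanch k
      have h1 := hQe k jk
      rw [hQ2app, if_neg hjki, hjk k, hjk (π k), if_pos rfl] at h1
      by_contra hne'
      rw [if_neg hne'] at h1
      norm_num at h1
    set k0 : Fin K := Fin.castLE (Nat.sub_le K 1) j0 with hk0def
    have h2 := hQe k0 i
    rw [hQ2app, if_pos rfl, hπ k0] at h2
    have h3 : ε * c k0 = 0 := by linarith
    have h4 : c k0 = 0 := by
      rcases mul_eq_zero.mp h3 with h | h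
      · exact absurd h (ne_of_gt hε)
      · exact h
    rw [hc1 j0] at h4
    exact hj0 h4
end

section
/- Let K ≥ 2, let F ∈ 𝓕_K^in, and suppose there exist a column index k₀ and a real number δ with 0 < δ < 1/2 such that δ ≤ F_{s,k₀} ≤ 1−δ for all rows s. Then for every Q ∈ 𝓠_K there exist Q² ∈ 𝓠_K with Q² ∉ 𝓠_K^an and F² ∈ 𝓕_K^in such that FQ = F²Q², (F,Q) is not equivalent to (F²,Q²), and moreover the set of indices k such that e_k is a column of Q² equals the set of indices k such that e_k is a column of Q with k₀ removed. -/
open Matrix BigOperators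

/-!
Let `u = 𝟙 - K e_{k₀}` and `T_t = 1 + t u e_{k₀}ᵀ`. As `∑ u = 0`, `T_t` preserves coordinate sums;
it fixes every vector vanishing at `k₀` and scales the `k₀`-entry by `1 - t (K - 1)`. For `β > 0`
there is `ε > 0` with `ε (K - 1) < 1` and `T_ε T_{-β} = 1`; put `Q² = T_ε Q` and `F² = F T_{-β}`,
so that `F² Q² = F Q`. Then `Q²` is column stochastic, keeps the anchor columns `e_k` with
`k ≠ k₀`, and loses `e_{k₀}` because an entry at most `1` is strictly shrunk. Only column `k₀` of
`F` moves, by `β ∑ₘ (F_{k₀} - F_m)`, which the margin `δ` absorbs when `β = δ / K`. Affine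
independence of the columns survives multiplication by the sum-preserving invertible `T_{-β}`,
and the new column `k₀` is an affine combination of the columns of `F` with weight
`1 + β (K - 1) > 1` on `F_{k₀}`, hence not a column of `F`.
-/

theorem colDiffIndep_iff_affineIndependent {M K : ℕ} (F : Matrix (Fin M) (Fin K) ℝ) :
    colDiffIndep F ↔ AffineIndependent ℝ F.col := by
  cases K with
  | zero =>
    exact iff_of_true (fun h => absurd h (lt_irrefl 0)) (affineIndependent_of_subsingleton _ _)
  | succ n =>
    have hdiff : (fun i : {k // k ≠ Fin.last n} => F.col i -ᵥ F.col (Fin.last n)) ∘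
        finSuccAboveEquiv (Fin.last n) = fun j s => F s j.castSucc - F s (Fin.last n) := by
      funext j s
      simp [finSuccAboveEquiv_apply]
    rw [affineIndependent_iff_linearIndependent_vsub ℝ _ (Fin.last n),
      ← linearIndependent_equiv (finSuccAboveEquiv (Fin.last n)), hdiff]
    exact ⟨fun h => h n.succ_pos, fun h _ => h⟩

theorem colDiffIndep_iff {M K : ℕ} (F : Matrix (Fin M) (Fin K) ℝ) :
    colDiffIndep F ↔ ∀ c : Fin K → ℝ, ∑ k, c k = 0 → F *ᵥ c = 0 → c = 0 := by
  have hcomb : ∀ c : Fin K → ℝ, ∑ k, c k • F.col k = F *ᵥ c := fun c => by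
    ext s
    simp [mulVec, dotProduct, mul_comm]
  rw [colDiffIndep_iff_affineIndependent, affineIndependent_iff_of_fintype]
  refine forall_congr' fun c => forall_congr' fun hc => ?_
  rw [Finset.univ.weightedVSub_eq_linear_combination hc, hcomb]
  exact imp_congr_right fun _ => funext_iff.symm

theorem colDiffIndep.eq_of_mulVec_eq {M K : ℕ} {F : Matrix (Fin M) (Fin K) ℝ}
    (hF : colDiffIndep F) {a b : Fin K → ℝ} (hsum : ∑ k, a k = ∑ k, b k)
    (h : F *ᵥ a = F *ᵥ b) : a = b :=
  sub_eq_zero.1 <| (colDiffIndep_iff F).1 hF (a - b)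
    (by simp [Finset.sum_sub_distrib, hsum]) (by rw [mulVec_sub, h, sub_self])

theorem colDiffIndep.mul {M K : ℕ} {F : Matrix (Fin M) (Fin K) ℝ} (hF : colDiffIndep F)
    {S T : Matrix (Fin K) (Fin K) ℝ} (hS : ∀ c, ∑ k, (S *ᵥ c) k = ∑ k, c k) (hTS : T * S = 1) :
    colDiffIndep (F * S) := by
  refine (colDiffIndep_iff _).2 fun c hc hFSc => ?_
  have hSc : S *ᵥ c = 0 :=
    (colDiffIndep_iff F).1 hF _ (by rw [hS, hc]) (by rw [mulVec_mulVec, hFSc])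
  rw [← one_mulVec c, ← hTS, ← mulVec_mulVec, hSc, mulVec_zero]

theorem Matrix.col_mul {l m n α : Type*} [Fintype m] [NonUnitalNonAssocSemiring α]
    (A : Matrix l m α) (B : Matrix m n α) (i : n) :
    (A * B).col i = A *ᵥ B.col i :=
  rfl

theorem memQ.le_one {K N : ℕ} {Q : Matrix (Fin K) (Fin N) ℝ} (hQ : memQ Q) (k : Fin K)
    (i : Fin N) : Q k i ≤ 1 :=
  hQ.2 i ▸ Finset.single_le_sum (fun l _ => hQ.1 l i) (Finset.mem_univ k)

theorem isColE_iff {K N : ℕ} (Q : Matrix (Fin K) (Fin N) ℝ) (k : Fin K) :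
    isColE Q k ↔ ∃ i, Q.col i = Pi.single k 1 := by
  simp only [isColE, funext_iff, Matrix.col_apply, Pi.single_apply]

section Shear

variable {K : ℕ} (k₀ : Fin K)

def shearDir : Fin K → ℝ := 1 - Pi.single k₀ (K : ℝ)

def shear (t : ℝ) : Matrix (Fin K) (Fin K) ℝ :=
  1 + t • vecMulVec (shearDir k₀) (Pi.single k₀ 1)

theorem sum_shearDir : ∑ k, shearDir k₀ k = 0 := by
  simp [shearDir, Finset.sum_sub_distrib]

theorem shearDir_self : shearDir k₀ k₀ = 1 - K := by
  simp [shearDir]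

theorem shearDir_of_ne {k : Fin K} (hk : k ≠ k₀) : shearDir k₀ k = 1 := by
  simp [shearDir, hk]

theorem mulVec_shearDir {M : ℕ} (F : Matrix (Fin M) (Fin K) ℝ) (r : Fin M) :
    (F *ᵥ shearDir k₀) r = ∑ m, (F r m - F r k₀) := by
  simp [shearDir, mulVec, dotProduct, mul_sub, Finset.sum_sub_distrib, Pi.single_apply, mul_comm]

theorem shear_mulVec (t : ℝ) (q : Fin K → ℝ) :
    shear k₀ t *ᵥ q = q + (t * q k₀) • shearDir k₀ := by
  rw [shear, add_mulVec, one_mulVec, smul_mulVec, vecMulVec_mulVec, single_dotProduct, one_mul,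
    op_smul_eq_smul, smul_smul]

theorem shear_mulVec_apply_self (t : ℝ) (q : Fin K → ℝ) :
    (shear k₀ t *ᵥ q) k₀ = (1 - t * (K - 1)) * q k₀ := by
  rw [shear_mulVec, Pi.add_apply, Pi.smul_apply, shearDir_self, smul_eq_mul]
  ring

theorem shear_mulVec_of_apply_eq_zero (t : ℝ) {q : Fin K → ℝ} (hq : q k₀ = 0) :
    shear k₀ t *ᵥ q = q := by
  simp [shear_mulVec, hq]

theorem sum_shear_mulVec (t : ℝ) (q : Fin K → ℝ) : ∑ k, (shear k₀ t *ᵥ q) k = ∑ k, q k := by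
  simp [shear_mulVec, Finset.sum_add_distrib, ← Finset.mul_sum, sum_shearDir]

theorem shear_mul_shear (s t : ℝ) :
    shear k₀ s * shear k₀ t = shear k₀ (s + t - s * t * (K - 1)) := by
  refine ext_iff_mulVec.2 fun q => ?_
  rw [← mulVec_mulVec, shear_mulVec, shear_mulVec, shear_mulVec, Pi.add_apply, Pi.smul_apply,
    shearDir_self, smul_eq_mul, add_assoc, ← add_smul]
  congr 2
  ring

theorem shear_mul_shear_eq_one {s t : ℝ} (hst : s + t = s * t * (K - 1)) :
    shear k₀ s * shear k₀ t = 1 := by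
  rw [shear_mul_shear, hst, sub_self, shear, zero_smul, add_zero]

theorem exists_shear_mul_shear_neg_eq_one (hK : 2 ≤ K) {β : ℝ} (hβ : 0 < β) :
    ∃ ε : ℝ, 0 < ε ∧ 0 < ε * (K - 1) ∧ ε * (K - 1) < 1 ∧ shear k₀ ε * shear k₀ (-β) = 1 := by
  have hK1 : (1 : ℝ) ≤ K - 1 := by
    have : (2 : ℝ) ≤ K := by exact_mod_cast hK
    linarith
  have hεK : β / (1 + β * (K - 1)) * (K - 1) = β * (K - 1) / (1 + β * (K - 1)) :=
    div_mul_eq_mul_div _ _ _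
  refine ⟨β / (1 + β * (K - 1)), by positivity, by rw [hεK]; positivity, ?_,
    shear_mul_shear_eq_one k₀ ?_⟩
  · rw [hεK, div_lt_one (by positivity)]
    linarith
  · field_simp
    ring

theorem mul_shear_apply {M : ℕ} (F : Matrix (Fin M) (Fin K) ℝ) (t : ℝ) (r : Fin M) (l : Fin K) :
    (F * shear k₀ t) r l = F r l + if l = k₀ then t * ∑ m, (F r m - F r k₀) else 0 := by
  rw [shear, Matrix.mul_add, Matrix.mul_one, Matrix.mul_smul, mul_vecMulVec]
  simp [vecMulVec_apply, mulVec_shearDir, Pi.single_apply]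

theorem shear_mulVec_nonneg {ε : ℝ} (hε : 0 ≤ ε) (hεK : ε * (K - 1) ≤ 1) {q : Fin K → ℝ}
    (hq : 0 ≤ q) : 0 ≤ shear k₀ ε *ᵥ q := by
  intro k
  by_cases hk : k = k₀
  · subst hk
    rw [Pi.zero_apply, shear_mulVec_apply_self]
    exact mul_nonneg (by linarith) (hq k)
  · rw [shear_mulVec, Pi.add_apply, Pi.smul_apply, shearDir_of_ne k₀ hk, smul_eq_mul, mul_one]
    linarith [hq k, mul_nonneg hε (hq k₀)]

theorem shear_mulVec_eq_single_iff {ε : ℝ} (h0 : 0 < ε * (K - 1)) (h1 : ε * (K - 1) < 1)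
    {q : Fin K → ℝ} (hq : q k₀ ≤ 1) (k : Fin K) :
    shear k₀ ε *ᵥ q = Pi.single k 1 ↔ q = Pi.single k 1 ∧ k ≠ k₀ := by
  constructor
  · intro h
    have hk₀ := congrFun h k₀
    rw [shear_mulVec_apply_self] at hk₀
    by_cases hk : k = k₀
    · subst hk
      rw [Pi.single_eq_same] at hk₀
      nlinarith
    · rw [Pi.single_eq_of_ne' hk] at hk₀
      have hq0 : q k₀ = 0 := (mul_eq_zero.1 hk₀).resolve_left (by linarith)
      exact ⟨shear_mulVec_of_apply_eq_zero k₀ ε hq0 ▸ h, hk⟩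
  · rintro ⟨rfl, hk⟩
    exact shear_mulVec_of_apply_eq_zero k₀ ε (Pi.single_eq_of_ne' hk 1)

theorem memQ_shear_mul {N : ℕ} {ε : ℝ} (hε : 0 ≤ ε) (hεK : ε * (K - 1) ≤ 1)
    {Q : Matrix (Fin K) (Fin N) ℝ} (hQ : memQ Q) : memQ (shear k₀ ε * Q) :=
  ⟨fun k i => shear_mulVec_nonneg k₀ hε hεK (fun l => hQ.1 l i) k,
    fun i => (sum_shear_mulVec k₀ ε (Q.col i)).trans (hQ.2 i)⟩

theorem isColE_shear_mul_iff {N : ℕ} {ε : ℝ} (h0 : 0 < ε * (K - 1)) (h1 : ε * (K - 1) < 1)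
    {Q : Matrix (Fin K) (Fin N) ℝ} (hQ : memQ Q) (k : Fin K) :
    isColE (shear k₀ ε * Q) k ↔ isColE Q k ∧ k ≠ k₀ := by
  rw [isColE_iff, isColE_iff, ← exists_and_right]
  refine exists_congr fun i => ?_
  rw [Matrix.col_mul]
  exact shear_mulVec_eq_single_iff k₀ h0 h1 (hQ.le_one k₀ i) k

theorem memF_mul_shear {M : ℕ} {F : Matrix (Fin M) (Fin K) ℝ} (hF : memF F) {δ t : ℝ}
    (hFk₀ : ∀ s, δ ≤ F s k₀ ∧ F s k₀ ≤ 1 - δ) (ht : |t| * K ≤ δ) : memF (F * shear k₀ t) := by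
  intro r l
  rw [mul_shear_apply]
  split_ifs with hl
  · subst hl
    obtain ⟨hδF, hFδ⟩ := hFk₀ r
    have hsum : |∑ m, (F r m - F r l)| ≤ K * (1 - δ) :=
      calc |∑ m, (F r m - F r l)| ≤ ∑ m, |F r m - F r l| := Finset.abs_sum_le_sum_abs _ _
        _ ≤ ∑ _m : Fin K, (1 - δ) := Finset.sum_le_sum fun m _ =>
          abs_sub_le_iff.2 ⟨by linarith [(hF r m).2], by linarith [(hF r m).1]⟩
        _ = K * (1 - δ) := by rw [Finset.sum_const, Finset.card_univ, Fintype.card_fin, nsmul_eq_mul]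
    have hδ : 0 ≤ δ := le_trans (by positivity) ht
    have hshift : |t * ∑ m, (F r m - F r l)| ≤ δ :=
      calc |t * ∑ m, (F r m - F r l)| ≤ |t| * (K * (1 - δ)) := by
            rw [abs_mul]
            exact mul_le_mul_of_nonneg_left hsum (abs_nonneg t)
        _ ≤ δ * (1 - δ) := by
            rw [← mul_assoc]
            exact mul_le_mul_of_nonneg_right ht (by linarith)
        _ ≤ δ := by nlinarith
    constructor <;> linarith [abs_le.1 hshift]
  · simpa using hF r l

theorem not_mEquiv_mul_shear {M N : ℕ} {F : Matrix (Fin M) (Fin K) ℝ} (hF : colDiffIndep F)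
    (hK : 2 ≤ K) {t : ℝ} (ht : t < 0) {Q Q2 : Matrix (Fin K) (Fin N) ℝ} :
    ¬ MEquiv F Q (F * shear k₀ t) Q2 := by
  rintro ⟨π, -, hcol, -⟩
  have hw : shear k₀ t *ᵥ Pi.single k₀ 1 = Pi.single (π k₀) 1 := by
    refine hF.eq_of_mulVec_eq ((sum_shear_mulVec k₀ t _).trans (by simp)) (funext fun s => ?_)
    rw [mulVec_mulVec, mulVec_single_one, mulVec_single_one]
    exact hcol k₀ s
  have hw₀ := congrFun hw k₀
  rw [shear_mulVec_apply_self, Pi.single_eq_same, mul_one, Pi.single_apply] at hw₀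
  have hK' : (2 : ℝ) ≤ K := by exact_mod_cast hK
  split_ifs at hw₀ <;> nlinarith

end Shear

theorem stmt2_general {M N K : ℕ} (hK : 2 ≤ K)
    (F : Matrix (Fin M) (Fin K) ℝ) (hF : memFin F)
    (k₀ : Fin K) (δ : ℝ) (hδ0 : 0 < δ)
    (hFk₀ : ∀ s, δ ≤ F s k₀ ∧ F s k₀ ≤ 1 - δ) :
    ∀ Q : Matrix (Fin K) (Fin N) ℝ, memQ Q →
      ∃ (Q2 : Matrix (Fin K) (Fin N) ℝ) (F2 : Matrix (Fin M) (Fin K) ℝ),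
        memQ Q2 ∧ ¬ memQan Q2 ∧ memFin F2 ∧
        F * Q = F2 * Q2 ∧ ¬ MEquiv F Q F2 Q2 ∧
        {k | isColE Q2 k} = {k | isColE Q k} \ {k₀} := by
  intro Q hQ
  have hK0 : (0 : ℝ) < K := by exact_mod_cast (by omega : 0 < K)
  have hβ : 0 < δ / K := div_pos hδ0 hK0
  have hβK : |-(δ / K)| * K ≤ δ := by rw [abs_neg, abs_of_pos hβ, div_mul_cancel₀ _ hK0.ne']
  obtain ⟨ε, hε, hεK0, hεK1, hinv⟩ := exists_shear_mul_shear_neg_eq_one k₀ hK hβ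
  refine ⟨shear k₀ ε * Q, F * shear k₀ (-(δ / K)), memQ_shear_mul k₀ hε.le hεK1.le hQ,
    fun hQ2 => ((isColE_shear_mul_iff k₀ hεK0 hεK1 hQ k₀).1 (hQ2.2 k₀)).2 rfl,
    ⟨memF_mul_shear k₀ hF.1 hFk₀ hβK, hF.2.mul (sum_shear_mulVec k₀ _) hinv⟩, ?_,
    not_mEquiv_mul_shear k₀ hF.2 hK (neg_neg_of_pos hβ),
    Set.ext fun k => isColE_shear_mul_iff k₀ hεK0 hεK1 hQ k⟩
  rw [Matrix.mul_assoc, ← Matrix.mul_assoc (shear k₀ _), mul_eq_one_comm.1 hinv, Matrix.one_mul]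

/-- if `F ∈ 𝓕_K^in` has a column `k₀` with entries in `[δ, 1−δ]`,
then for every `Q ∈ 𝓠_K` there are `Q² ∈ 𝓠_K ∖ 𝓠_K^an` and `F² ∈ 𝓕_K^in` with
`FQ = F²Q²`, `(F,Q) ≁ (F²,Q²)`, and the anchor columns of `Q²` are those of `Q` minus `k₀`. -/
theorem stmt2 {M N K : ℕ} (hM : 1 ≤ M) (hN : 1 ≤ N) (hK : 2 ≤ K)
    (F : Matrix (Fin M) (Fin K) ℝ) (hF : memFin F)
    (k₀ : Fin K) (δ : ℝ) (hδ0 : 0 < δ) (hδh : δ < 1 / 2)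
    (hFk₀ : ∀ s, δ ≤ F s k₀ ∧ F s k₀ ≤ 1 - δ) :
    ∀ Q : Matrix (Fin K) (Fin N) ℝ, memQ Q →
      ∃ (Q2 : Matrix (Fin K) (Fin N) ℝ) (F2 : Matrix (Fin M) (Fin K) ℝ),
        memQ Q2 ∧ ¬ memQan Q2 ∧ memFin F2 ∧
        F * Q = F2 * Q2 ∧ ¬ MEquiv F Q F2 Q2 ∧
        {k | isColE Q2 k} = {k | isColE Q k} \ {k₀} :=
  stmt2_general hK F hF k₀ δ hδ0 hFk₀
end

section
/- Suppose F¹ ∈ 𝓕_{K₁}^an, Q¹ ∈ 𝓠_{K₁}^in, F² ∈ 𝓕_{K₂}^an, Q² ∈ 𝓠_{K₂}^in and the matrix products satisfy F¹Q¹ = F²Q². Then (F¹,Q¹) ∼ (F²,Q²); in particular K₁ = K₂ and there is a permutation of {1,…,K₁} matching the columns of F² with those of F¹ and the rows of Q² with those of Q¹. -/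
open Matrix BigOperators

section Helpers

/-- From linear independence of rows, equal combinations have equal coefficients. -/
lemma lin_coeff {K N : ℕ} {Q : Matrix (Fin K) (Fin N) ℝ}
    (h : LinearIndependent ℝ fun k : Fin K => Q k) (c d : Fin K → ℝ)
    (hcd : ∀ i, ∑ k, c k * Q k i = ∑ k, d k * Q k i) : ∀ k, c k = d k := by
  have hz : ∀ k, (c - d) k = 0 := by
    apply Fintype.linearIndependent_iff.mp h
    funext i
    simp only [Finset.sum_apply, Pi.smul_apply, Pi.sub_apply, smul_eq_mul, sub_mul]
    rw [Finset.sum_sub_distrib, hcd i, sub_self]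
    rfl
  intro k
  have := hz k
  simpa [sub_eq_zero] using this

/-- Anchor rows produce cone representations. -/
lemma cone_rep {M N K₁ K₂ : ℕ}
    (F1 : Matrix (Fin M) (Fin K₁) ℝ) (Q1 : Matrix (Fin K₁) (Fin N) ℝ)
    (F2 : Matrix (Fin M) (Fin K₂) ℝ) (Q2 : Matrix (Fin K₂) (Fin N) ℝ)
    (hF1 : memFan F1) (hF2 : memFan F2) (hprod : F1 * Q1 = F2 * Q2) (k : Fin K₁) :
    ∃ c : Fin K₂ → ℝ, (∀ l, 0 ≤ c l) ∧ ∀ i, Q1 k i = ∑ l, c l * Q2 l i := by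
  obtain ⟨s, hs, hz⟩ := hF1.2 k
  refine ⟨fun l => F2 s l / F1 s k, fun l => div_nonneg (hF2.1 s l).1 hs.le, fun i => ?_⟩
  have h := congrFun (congrFun hprod s) i
  simp only [Matrix.mul_apply] at h
  have hL : ∑ m, F1 s m * Q1 m i = F1 s k * Q1 k i := by
    refine Finset.sum_eq_single k (fun m _ hm => ?_) (by simp)
    rw [hz m hm, zero_mul]
  rw [hL] at h
  have : Q1 k i = (∑ l, F2 s l * Q2 l i) / F1 s k := by
    rw [← h, mul_div_cancel_left₀ _ hs.ne']
  rw [this, Finset.sum_div]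
  exact Finset.sum_congr rfl fun l _ => by rw [div_mul_eq_mul_div]

end Helpers

/-- if `F¹ ∈ 𝓕_{K₁}^an`, `Q¹ ∈ 𝓠_{K₁}^in`, `F² ∈ 𝓕_{K₂}^an`, `Q² ∈ 𝓠_{K₂}^in`
and `F¹Q¹ = F²Q²`, then `K₁ = K₂` and `(F¹,Q¹) ∼ (F²,Q²)`. -/
theorem stmt3 {M N K₁ K₂ : ℕ} (hM : 1 ≤ M) (hN : 1 ≤ N) (hK₁ : 1 ≤ K₁) (hK₂ : 1 ≤ K₂)
    (F1 : Matrix (Fin M) (Fin K₁) ℝ) (Q1 : Matrix (Fin K₁) (Fin N) ℝ)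
    (F2 : Matrix (Fin M) (Fin K₂) ℝ) (Q2 : Matrix (Fin K₂) (Fin N) ℝ)
    (hF1 : memFan F1) (hQ1 : memQin Q1) (hF2 : memFan F2) (hQ2 : memQin Q2)
    (hprod : F1 * Q1 = F2 * Q2) :
    K₁ = K₂ ∧ MEquiv F1 Q1 F2 Q2 := by
  classical
  choose A hApos hArep using fun k => cone_rep F1 Q1 F2 Q2 hF1 hF2 hprod k
  choose B hBpos hBrep using fun l => cone_rep F2 Q2 F1 Q1 hF2 hF1 hprod.symm l
  -- products of coefficient matrices are identities
  have hAB : ∀ k m, (∑ l, A k l * B l m) = if m = k then 1 else 0 := by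
    intro k
    refine lin_coeff hQ1.2 _ _ fun i => ?_
    calc ∑ m, (∑ l, A k l * B l m) * Q1 m i
        = ∑ l, A k l * ∑ m, B l m * Q1 m i := by
          simp only [Finset.sum_mul, Finset.mul_sum, mul_assoc]
          rw [Finset.sum_comm]
      _ = ∑ l, A k l * Q2 l i :=
          Finset.sum_congr rfl fun l _ => by rw [← hBrep l i]
      _ = Q1 k i := (hArep k i).symm
      _ = ∑ m, (if m = k then 1 else 0) * Q1 m i := by simp
  have hBA : ∀ l m, (∑ k, B l k * A k m) = if m = l then 1 else 0 := by
    intro l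
    refine lin_coeff hQ2.2 _ _ fun i => ?_
    calc ∑ m, (∑ k, B l k * A k m) * Q2 m i
        = ∑ k, B l k * ∑ m, A k m * Q2 m i := by
          simp only [Finset.sum_mul, Finset.mul_sum, mul_assoc]
          rw [Finset.sum_comm]
      _ = ∑ k, B l k * Q1 k i :=
          Finset.sum_congr rfl fun k _ => by rw [← hArep k i]
      _ = Q2 l i := (hBrep l i).symm
      _ = ∑ m, (if m = l then 1 else 0) * Q2 m i := by simp
  -- K₁ = K₂ via span dimension
  have hspan : Submodule.span ℝ (Set.range fun k : Fin K₁ => Q1 k)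
      = Submodule.span ℝ (Set.range fun l : Fin K₂ => Q2 l) := by
    apply le_antisymm
    · rw [Submodule.span_le]
      rintro _ ⟨k, rfl⟩
      show Q1 k ∈ (Submodule.span ℝ (Set.range fun l : Fin K₂ => Q2 l) : Set (Fin N → ℝ))
      have h : Q1 k = ∑ l, A k l • Q2 l := by
        funext i
        rw [hArep k i]
        simp [Finset.sum_apply]
      rw [h]
      exact Submodule.sum_mem _ fun l _ =>
        Submodule.smul_mem _ _ (Submodule.subset_span ⟨l, rfl⟩)
    · rw [Submodule.span_le]
      rintro _ ⟨l, rfl⟩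
      show Q2 l ∈ (Submodule.span ℝ (Set.range fun k : Fin K₁ => Q1 k) : Set (Fin N → ℝ))
      have h : Q2 l = ∑ k, B l k • Q1 k := by
        funext i
        rw [hBrep l i]
        simp [Finset.sum_apply]
      rw [h]
      exact Submodule.sum_mem _ fun k _ =>
        Submodule.smul_mem _ _ (Submodule.subset_span ⟨k, rfl⟩)
  have hK : K₁ = K₂ := by
    have h1 := finrank_span_eq_card hQ1.2
    have h2 := finrank_span_eq_card hQ2.2
    rw [hspan, h2] at h1
    simpa using h1.symm
  -- monomial structure
  have hex : ∀ k : Fin K₁, ∃ l, 0 < A k l ∧ 0 < B l k := by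
    intro k
    have h1 : (∑ l, A k l * B l k) = 1 := by rw [hAB k k, if_pos rfl]
    obtain ⟨l, -, hl⟩ := Finset.exists_ne_zero_of_sum_ne_zero (by rw [h1]; norm_num :
      (∑ l, A k l * B l k) ≠ 0)
    have hAl := (hApos k l).lt_of_ne' fun h => hl (by rw [h, zero_mul])
    have hBl := (hBpos l k).lt_of_ne' fun h => hl (by rw [h, mul_zero])
    exact ⟨l, hAl, hBl⟩
  choose σ hAσ hBσ using hex
  have hAcol : ∀ k l, l ≠ σ k → A k l = 0 := by
    intro k l hl
    have h0 : (∑ m, B (σ k) m * A m l) = 0 := by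
      rw [hBA (σ k) l, if_neg hl]
    have hterm : B (σ k) k * A k l = 0 :=
      (Finset.sum_eq_zero_iff_of_nonneg fun m _ =>
        mul_nonneg (hBpos (σ k) m) (hApos m l)).mp h0 k (Finset.mem_univ k)
    rcases mul_eq_zero.mp hterm with h | h
    · exact absurd h (hBσ k).ne'
    · exact h
  have hσinj : Function.Injective σ := by
    intro k k' hσkk'
    by_contra hne
    have h0 : (∑ l, A k' l * B l k) = 0 := by
      rw [hAB k' k, if_neg hne]
    have hterm : A k' (σ k) * B (σ k) k = 0 :=
      (Finset.sum_eq_zero_iff_of_nonneg fun l _ =>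
        mul_nonneg (hApos k' l) (hBpos l k)).mp h0 (σ k) (Finset.mem_univ (σ k))
    rcases mul_eq_zero.mp hterm with h | h
    · rw [hσkk'] at h
      exact absurd h (hAσ k').ne'
    · exact absurd h (hBσ k).ne'
  have hσbij : Function.Bijective σ := by
    rw [Fintype.bijective_iff_injective_and_card]
    exact ⟨hσinj, by simp [hK]⟩
  set e : Fin K₁ ≃ Fin K₂ := Equiv.ofBijective σ hσbij with he
  have hσsymm : ∀ l, σ (e.symm l) = l := fun l => e.apply_symm_apply l
  -- Q1 k = a k • Q2 (σ k)
  have hsingle : ∀ k i, Q1 k i = A k (σ k) * Q2 (σ k) i := by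
    intro k i
    rw [hArep k i]
    exact Finset.sum_eq_single (σ k) (fun l _ hl => by rw [hAcol k l hl, zero_mul]) (by simp)
  -- scalars are 1
  have hone : ∀ k, A k (σ k) = 1 := by
    have key : ∀ l : Fin K₂, A (e.symm l) (σ (e.symm l)) = 1 := by
      refine lin_coeff hQ2.2 _ 1 fun i => ?_
      have h : ∑ l, A (e.symm l) (σ (e.symm l)) * Q2 l i = ∑ k, Q1 k i := by
        refine Fintype.sum_equiv e.symm _ _ fun l => ?_
        show A (e.symm l) (σ (e.symm l)) * Q2 l i = Q1 (e.symm l) i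
        rw [hsingle (e.symm l) i, hσsymm l]
      rw [h, hQ1.1.2 i]
      simp [hQ2.1.2 i]
    intro k
    have h := key (e k)
    rwa [e.symm_apply_apply] at h
  have hQrow : ∀ k i, Q1 k i = Q2 (σ k) i := by
    intro k i
    rw [hsingle k i, hone k, one_mul]
  -- F relation
  have hFrow : ∀ s l, F1 s (e.symm l) = F2 s l := by
    intro s
    refine lin_coeff hQ2.2 _ _ fun i => ?_
    have h := congrFun (congrFun hprod s) i
    simp only [Matrix.mul_apply] at h
    calc ∑ l, F1 s (e.symm l) * Q2 l i
        = ∑ k, F1 s k * Q1 k i := by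
          refine Fintype.sum_equiv e.symm _ _ fun l => ?_
          show F1 s (e.symm l) * Q2 l i = F1 s (e.symm l) * Q1 (e.symm l) i
          rw [hQrow (e.symm l) i, hσsymm l]
      _ = ∑ l, F2 s l * Q2 l i := h
  refine ⟨hK, fun l => e.symm l, e.symm.bijective, fun l s => (hFrow s l).symm, fun l i => ?_⟩
  rw [hQrow (e.symm l) i, hσsymm l]
end

section
/- Let K ≥ 2 and M ≥ K+1. Let F ∈ 𝓕_K^an be such that there exist δ > 0 and a row index i with δ ≤ F_{ik} ≤ 1−δ for all k ∈ {1,…,K}, and let Q ∈ 𝓠_K have linearly dependent rows (i.e. Q ∉ 𝓠_K^in). Then there exists F² ∈ 𝓕_K^an such that FQ = F²Q but (F,Q) is not equivalent to (F²,Q). -/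
open Matrix BigOperators

/-!
A linear dependency `c ᵥ* Q = 0` among the rows of `Q` lets us move the row `i` of `F` to
`F i + ε • c` without changing `F * Q`. Since all entries of that row lie in `[δ, 1 - δ]`, a
small `ε` keeps them in `[0, 1]`; since they are all positive and `K ≥ 2`, row `i` is not an
anchor row, so the anchors survive. Choosing `ε` outside a finite set makes the new entry
`F i k₀ + ε c k₀` (with `c k₀ ≠ 0`) differ from every entry of the old row `i`, which rules out
any column permutation.
-/

theorem Matrix.exists_vecMul_eq_zero_of_not_linearIndependent {m n R : Type*} [Fintype m]
    [Ring R] {Q : Matrix m n R} (hQ : ¬ LinearIndependent R fun k => Q k) :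
    ∃ c : m → R, c ᵥ* Q = 0 ∧ ∃ k, c k ≠ 0 := by
  obtain ⟨c, hc, k, hk⟩ := Fintype.not_linearIndependent_iff.mp hQ
  exact ⟨c, by rwa [vecMul_eq_sum], k, hk⟩

theorem Matrix.updateRow_add_smul_mul_of_vecMul_eq_zero {l m n R : Type*} [DecidableEq l]
    [Fintype m] [Ring R] (A : Matrix l m R) (i : l) (ε : R) {c : m → R} {Q : Matrix m n R}
    (hc : c ᵥ* Q = 0) : A.updateRow i (A i + ε • c) * Q = A * Q := by
  rw [updateRow_mul, add_vecMul, smul_vecMul, hc, smul_zero, add_zero]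
  exact updateRow_eq_self (A * Q) i

theorem memFan_updateRow {M K : ℕ} {F : Matrix (Fin M) (Fin K) ℝ} (hF : memFan F)
    (hK : 2 ≤ K) {i : Fin M} (hFi : ∀ k, 0 < F i k) {v : Fin K → ℝ}
    (hv : ∀ k, 0 ≤ v k ∧ v k ≤ 1) : memFan (F.updateRow i v) := by
  have : Nontrivial (Fin K) := Fin.nontrivial_iff_two_le.mpr hK
  refine ⟨fun s k => ?_, fun k => ?_⟩
  · obtain rfl | hs := eq_or_ne s i
    · simpa using hv k
    · simpa [updateRow_ne hs] using hF.1 s k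
  · obtain ⟨s, hpos, hzero⟩ := hF.2 k
    have hs : s ≠ i := by
      rintro rfl
      obtain ⟨l, hl⟩ := exists_ne k
      exact (hFi l).ne' (hzero l hl)
    exact ⟨s, by simpa [updateRow_ne hs] using hpos, by simpa [updateRow_ne hs] using hzero⟩

theorem not_mEquiv_of_forall_ne {M N K₁ K₂ : ℕ} {F1 : Matrix (Fin M) (Fin K₁) ℝ}
    {Q1 : Matrix (Fin K₁) (Fin N) ℝ} {F2 : Matrix (Fin M) (Fin K₂) ℝ}
    {Q2 : Matrix (Fin K₂) (Fin N) ℝ} (i : Fin M) (k : Fin K₂) (h : ∀ l, F2 i k ≠ F1 i l) :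
    ¬ MEquiv F1 Q1 F2 Q2 :=
  fun ⟨π, _, hF, _⟩ => h (π k) (hF k i)

theorem exists_mem_Ioo_add_mul_notMem (A : Finset ℝ) (a : ℝ) {b r : ℝ} (hb : b ≠ 0)
    (hr : 0 < r) : ∃ ε ∈ Set.Ioo 0 r, a + ε * b ∉ A := by
  obtain ⟨ε, hε, hεA⟩ :=
    (Set.Ioo_infinite hr).exists_notMem_finset (A.image fun x => (x - a) / b)
  refine ⟨ε, hε, fun h => hεA (Finset.mem_image.mpr ⟨_, h, ?_⟩)⟩
  field_simp
  ring

theorem stmt4_general {M N K : ℕ} (hK : 2 ≤ K)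
    (F : Matrix (Fin M) (Fin K) ℝ) (hF : memFan F)
    (δ : ℝ) (hδ : 0 < δ) (i : Fin M) (hrow : ∀ k, δ ≤ F i k ∧ F i k ≤ 1 - δ)
    (Q : Matrix (Fin K) (Fin N) ℝ)
    (hQdep : ¬ LinearIndependent ℝ (fun k : Fin K => Q k)) :
    ∃ F2 : Matrix (Fin M) (Fin K) ℝ, memFan F2 ∧ F * Q = F2 * Q ∧ ¬ MEquiv F Q F2 Q := by
  obtain ⟨c, hcQ, k₀, hck₀⟩ := exists_vecMul_eq_zero_of_not_linearIndependent hQdep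
  have hc : 0 < ‖c‖ := norm_pos_iff.mpr fun h => hck₀ (by simp [h])
  obtain ⟨ε, ⟨hε0, hεc⟩, hεnew⟩ :=
    exists_mem_Ioo_add_mul_notMem (Finset.univ.image (F i)) (F i k₀) hck₀ (div_pos hδ hc)
  have hsmall (k : Fin K) : |ε * c k| < δ :=
    calc |ε * c k| ≤ ε * ‖c‖ := by
          rw [abs_mul, abs_of_pos hε0, ← Real.norm_eq_abs]
          exact mul_le_mul_of_nonneg_left (norm_le_pi_norm c k) hε0.le
      _ < δ := (lt_div_iff₀ hc).mp hεc
  refine ⟨F.updateRow i (F i + ε • c),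
    memFan_updateRow hF hK (fun k => hδ.trans_le (hrow k).1) (fun k => ?_),
    (F.updateRow_add_smul_mul_of_vecMul_eq_zero i ε hcQ).symm,
    not_mEquiv_of_forall_ne i k₀ fun l h => hεnew ?_⟩
  · obtain ⟨hlow, hhigh⟩ := abs_lt.mp (hsmall k)
    obtain ⟨hδk, hkδ⟩ := hrow k
    simp only [Pi.add_apply, Pi.smul_apply, smul_eq_mul]
    constructor <;> linarith
  · rw [updateRow_self] at h
    exact Finset.mem_image.mpr ⟨l, Finset.mem_univ l, by simpa using h.symm⟩

/-- if `F ∈ 𝓕_K^an` has a row `i` with entries in `[δ, 1−δ]` and the rows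
of `Q ∈ 𝓠_K` are linearly dependent, there is `F² ∈ 𝓕_K^an` with `FQ = F²Q` but
`(F,Q) ≁ (F²,Q)`. -/
theorem stmt4 {M N K : ℕ} (hN : 1 ≤ N) (hK : 2 ≤ K) (hM : K + 1 ≤ M)
    (F : Matrix (Fin M) (Fin K) ℝ) (hF : memFan F)
    (δ : ℝ) (hδ : 0 < δ) (i : Fin M) (hrow : ∀ k, δ ≤ F i k ∧ F i k ≤ 1 - δ)
    (Q : Matrix (Fin K) (Fin N) ℝ) (hQ : memQ Q)
    (hQdep : ¬ LinearIndependent ℝ (fun k : Fin K => Q k)) :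
    ∃ F2 : Matrix (Fin M) (Fin K) ℝ, memFan F2 ∧ F * Q = F2 * Q ∧ ¬ MEquiv F Q F2 Q :=
  stmt4_general hK F hF δ hδ i hrow Q hQdep
end

section
/- Let 𝓜 be a model such that (1) for every (F,Q) ∈ 𝓜 the number of columns K(F) of F satisfies K(F) < M, and (2) for every (F,Q) ∈ 𝓜 and every F' ∈ 𝓕_{K(F)}^an, the pair (F',Q) belongs to 𝓜. Then 𝓜 is identifiable if and only if both of the following hold: (a) for all (F¹,Q¹),(F²,Q²) ∈ 𝓜 with F¹Q¹ = F²Q², cone(Q¹) = cone(Q²); and (b) for every (F,Q) ∈ 𝓜, the rows of Q are linearly independent. -/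
/-!
If the model is identifiable, equivalent factorizations have row-permuted `Q`, so the cones
agree. A dependency `d Q = 0` among the rows of `Q` would give two anchored matrices `F, F'`
(identity on top, last rows `d⁺` and `d⁻`) with `F Q = F' Q`; the anchor rows force the
equivalence to be the identity, hence `d⁺ = d⁻` and `d = 0`.

Conversely, if two cones spanned by independent rows agree, each row of one is a multiple of a
row of the other (a nonnegative matrix with nonnegative inverse is monomial), the unit column
sums make the multiples `1`, and independence of the rows recovers `F` from `F Q`.
-/

open Matrix BigOperators

section Cones

variable {N K K₁ K₂ : ℕ}

lemma row_mem_coneRows (Q : Matrix (Fin K) (Fin N) ℝ) (k : Fin K) : Q k ∈ coneRows Q :=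
  ⟨Pi.single k 1, fun l => (Pi.single_nonneg.2 zero_le_one : (0 : Fin K → ℝ) ≤ Pi.single k 1) l,
    by rw [← vecMul_eq_sum, single_one_vecMul]; rfl⟩

lemma coneRows_submatrix_equiv (Q : Matrix (Fin K₁) (Fin N) ℝ) (e : Fin K₂ ≃ Fin K₁) :
    coneRows (Q.submatrix e id) = coneRows Q := by
  ext x
  constructor
  · rintro ⟨c, hc, rfl⟩
    refine ⟨c ∘ e.symm, fun _ => hc _, ?_⟩
    rw [← e.sum_comp]
    simp only [Function.comp_apply, Equiv.symm_apply_apply]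
    rfl
  · rintro ⟨c, hc, rfl⟩
    exact ⟨c ∘ e, fun _ => hc _, (e.sum_comp fun l => c l • Q l).symm⟩

lemma coneRows_eq_of_mequiv {M : ℕ} {F1 : Matrix (Fin M) (Fin K₁) ℝ}
    {Q1 : Matrix (Fin K₁) (Fin N) ℝ} {F2 : Matrix (Fin M) (Fin K₂) ℝ}
    {Q2 : Matrix (Fin K₂) (Fin N) ℝ} (h : MEquiv F1 Q1 F2 Q2) : coneRows Q1 = coneRows Q2 := by
  obtain ⟨π, hπ, -, hQ⟩ := h
  have : Q2 = Q1.submatrix (Equiv.ofBijective π hπ) id := Matrix.ext hQ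
  rw [this, coneRows_submatrix_equiv]

lemma eq_of_row_eq_smul_row {Q : Matrix (Fin K) (Fin N) ℝ} (hQ : LinearIndependent ℝ Q.row)
    {i j : Fin K} {r : ℝ} (h : Q i = r • Q j) : i = j := by
  have hsingle : (Pi.single i 1 : Fin K → ℝ) = Pi.single j r := by
    apply vecMul_injective_iff.2 hQ
    show Pi.single i 1 ᵥ* Q = Pi.single j r ᵥ* Q
    rw [single_vecMul, single_vecMul, one_smul]
    exact h
  by_contra hij
  simpa [hij] using congrFun hsingle i

/-- Writing `Q₂ₖ = ∑ₗ aₗ Q₁ₗ` and `Q₁ₗ = ∑ₘ bₗₘ Q₂ₘ` with `a, b ≥ 0`, independence gives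
`∑ₗ aₗ bₗₘ = δₖₘ`, so some `l` has `aₗ bₗₖ > 0`, and then `bₗₘ = 0` for every `m ≠ k`. -/
lemma exists_row_eq_smul_of_coneRows_eq {Q1 : Matrix (Fin K₁) (Fin N) ℝ}
    {Q2 : Matrix (Fin K₂) (Fin N) ℝ} (hQ2 : LinearIndependent ℝ Q2.row)
    (hc : coneRows Q1 = coneRows Q2) (k : Fin K₂) : ∃ l, ∃ r : ℝ, Q1 l = r • Q2 k := by
  obtain ⟨a, ha, hk⟩ : Q2 k ∈ coneRows Q1 := hc ▸ row_mem_coneRows Q2 k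
  choose b hb hl using fun l => (hc ▸ row_mem_coneRows Q1 l : Q1 l ∈ coneRows Q2)
  simp only [← vecMul_eq_sum] at hk hl
  have hab : a ᵥ* Matrix.of b = Pi.single k 1 := by
    apply vecMul_injective_iff.2 hQ2
    show a ᵥ* Matrix.of b ᵥ* Q2 = Pi.single k 1 ᵥ* Q2
    have hB : Matrix.of b * Q2 = Q1 := funext fun l => (hl l).symm
    rw [vecMul_vecMul, hB, single_one_vecMul]
    exact hk.symm
  have hdiag : ∑ l, a l * b l k = 1 := by simpa [vecMul, dotProduct] using congrFun hab k
  obtain ⟨l, -, hlk⟩ := Finset.exists_ne_zero_of_sum_ne_zero (hdiag.symm ▸ one_ne_zero)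
  have hal : 0 < a l := (ha l).lt_of_ne (left_ne_zero_of_mul hlk).symm
  have hoff : ∀ m, m ≠ k → b l m = 0 := by
    intro m hm
    have hsum : ∑ l', a l' * b l' m = 0 := by simpa [vecMul, dotProduct, hm] using congrFun hab m
    have := (Finset.sum_eq_zero_iff_of_nonneg fun l' _ => mul_nonneg (ha l') (hb l' m)).1 hsum l
      (Finset.mem_univ l)
    exact (mul_eq_zero.1 this).resolve_left hal.ne'
  refine ⟨l, b l k, ?_⟩
  rw [hl l, vecMul_eq_sum, Finset.sum_eq_single k (fun m _ hm => by rw [hoff m hm, zero_smul])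
    (by simp)]

lemma exists_equiv_of_coneRows_eq {Q1 : Matrix (Fin K₁) (Fin N) ℝ}
    {Q2 : Matrix (Fin K₂) (Fin N) ℝ} (hs1 : ∀ i, ∑ k, Q1 k i = 1) (hs2 : ∀ i, ∑ k, Q2 k i = 1)
    (hQ1 : LinearIndependent ℝ Q1.row) (hQ2 : LinearIndependent ℝ Q2.row)
    (hc : coneRows Q1 = coneRows Q2) : ∃ e : Fin K₂ ≃ Fin K₁, Q2 = Q1.submatrix e id := by
  choose σ r hσ using exists_row_eq_smul_of_coneRows_eq hQ2 hc
  choose τ s hτ using exists_row_eq_smul_of_coneRows_eq hQ1 hc.symm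
  have hτσ : ∀ k, τ (σ k) = k := fun k =>
    eq_of_row_eq_smul_row hQ2 (by rw [hτ, hσ, smul_smul])
  have hστ : ∀ l, σ (τ l) = l := fun l =>
    eq_of_row_eq_smul_row hQ1 (by rw [hσ, hτ, smul_smul])
  let e : Fin K₂ ≃ Fin K₁ := ⟨σ, τ, hτσ, hστ⟩
  have hr : r = fun _ => 1 := by
    apply vecMul_injective_iff.2 hQ2
    calc r ᵥ* Q2 = ∑ k, Q1 (e k) := by simp only [vecMul_eq_sum, ← hσ]; rfl
      _ = ∑ l, Q1 l := e.sum_comp Q1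
      _ = fun _ => 1 := (Finset.sum_fn _ _).trans (funext hs1)
      _ = (fun _ => 1) ᵥ* Q2 := by
        rw [vecMul_eq_sum, ← funext hs2, Finset.sum_fn]
        simp
  exact ⟨e, Matrix.ext fun k i => by simp [e, hσ, hr]⟩

lemma mequiv_of_coneRows_eq {M : ℕ} {F1 : Matrix (Fin M) (Fin K₁) ℝ}
    {Q1 : Matrix (Fin K₁) (Fin N) ℝ} {F2 : Matrix (Fin M) (Fin K₂) ℝ}
    {Q2 : Matrix (Fin K₂) (Fin N) ℝ} (hs1 : ∀ i, ∑ k, Q1 k i = 1) (hs2 : ∀ i, ∑ k, Q2 k i = 1)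
    (hQ1 : LinearIndependent ℝ Q1.row) (hQ2 : LinearIndependent ℝ Q2.row)
    (hc : coneRows Q1 = coneRows Q2) (hFQ : F1 * Q1 = F2 * Q2) : MEquiv F1 Q1 F2 Q2 := by
  obtain ⟨e, rfl⟩ := exists_equiv_of_coneRows_eq hs1 hs2 hQ1 hQ2 hc
  refine ⟨e, e.bijective, fun k s => ?_, fun _ _ => rfl⟩
  have hrow : F1 s = F2 s ∘ e.symm := by
    apply vecMul_injective_iff.2 hQ1
    show F1 s ᵥ* Q1 = (F2 s ∘ e.symm) ᵥ* Q1
    rw [← mul_apply_eq_vecMul, hFQ, mul_apply_eq_vecMul, vecMul_eq_sum, vecMul_eq_sum,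
      ← e.sum_comp]
    simp only [Function.comp_apply, Equiv.symm_apply_apply]
    rfl
  simp [hrow]

end Cones

section Anchored

variable {M N K : ℕ}

/-- When `K < M`, the first `K` rows form the identity matrix and the last row is `w`. -/
def anchoredMatrix (M : ℕ) (w : Fin K → ℝ) : Matrix (Fin M) (Fin K) ℝ :=
  fun s k => if (s : ℕ) = M - 1 then w k else if (s : ℕ) = k then 1 else 0

lemma memFan_anchoredMatrix (hKM : K < M) {w : Fin K → ℝ} (hw : ∀ k, 0 ≤ w k ∧ w k ≤ 1) :
    memFan (anchoredMatrix M w) := by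
  refine ⟨fun s k => ?_, fun k => ⟨⟨k, by omega⟩, ?_, fun l hl => ?_⟩⟩
  · unfold anchoredMatrix
    split_ifs
    exacts [hw k, ⟨zero_le_one, le_rfl⟩, ⟨le_rfl, zero_le_one⟩]
  · simp [anchoredMatrix, show (k : ℕ) ≠ M - 1 by omega]
  · simp [anchoredMatrix, show (k : ℕ) ≠ M - 1 by omega, Fin.val_ne_of_ne hl.symm]

lemma anchoredMatrix_mul_eq {w w' : Fin K → ℝ} {Q : Matrix (Fin K) (Fin N) ℝ}
    (h : w ᵥ* Q = w' ᵥ* Q) : anchoredMatrix M w * Q = anchoredMatrix M w' * Q := by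
  funext s
  rw [mul_apply_eq_vecMul, mul_apply_eq_vecMul]
  by_cases hs : (s : ℕ) = M - 1
  · have hlast : ∀ v : Fin K → ℝ, anchoredMatrix M v s = v := fun v => funext fun k => if_pos hs
    rw [hlast, hlast, h]
  · rw [show anchoredMatrix M w s = anchoredMatrix M w' s from
      funext fun k => by simp [anchoredMatrix, hs]]

lemma eq_of_anchoredMatrix_cols (hKM : K < M) {w w' : Fin K → ℝ} {π : Fin K → Fin K}
    (h : ∀ k s, anchoredMatrix M w' s k = anchoredMatrix M w s (π k)) : w' = w := by
  have hπ : ∀ k, π k = k := fun k => by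
    have := h k ⟨k, by omega⟩
    simp only [anchoredMatrix, show (k : ℕ) ≠ M - 1 by omega, if_false, if_true] at this
    split_ifs at this with hk
    exacts [(Fin.ext hk).symm, absurd this one_ne_zero]
  funext k
  simpa [anchoredMatrix, hπ] using h k ⟨M - 1, by omega⟩

lemma exists_vecMul_eq_zero_abs_le_one {Q : Matrix (Fin K) (Fin N) ℝ}
    (hQ : ¬LinearIndependent ℝ Q.row) : ∃ d, d ≠ 0 ∧ d ᵥ* Q = 0 ∧ ∀ k, |d k| ≤ 1 := by
  obtain ⟨c, hcQ, k, hk⟩ := Fintype.not_linearIndependent_iff.1 hQ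
  have hc : c ≠ 0 := fun h => hk (congrFun h k)
  refine ⟨‖c‖⁻¹ • c, smul_ne_zero (inv_ne_zero (norm_ne_zero_iff.2 hc)) hc, ?_, fun l => ?_⟩
  · rw [smul_vecMul, vecMul_eq_sum]
    exact (congrArg _ hcQ).trans (smul_zero _)
  · rw [Pi.smul_apply, smul_eq_mul, abs_mul, abs_inv, abs_norm]
    exact inv_mul_le_one_of_le₀ (norm_le_pi_norm c l) (norm_nonneg c)

lemma linearIndependent_rows_of_anchored (hKM : K < M) {Q : Matrix (Fin K) (Fin N) ℝ}
    (hQ : ∀ F F' : Matrix (Fin M) (Fin K) ℝ, memFan F → memFan F' → F * Q = F' * Q →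
      MEquiv F Q F' Q) : LinearIndependent ℝ Q.row := by
  by_contra hdep
  obtain ⟨d, hd0, hdQ, hd1⟩ := exists_vecMul_eq_zero_abs_le_one hdep
  have hpos : ∀ k, 0 ≤ d⁺ k ∧ d⁺ k ≤ 1 := fun k =>
    ⟨posPart_nonneg _, sup_le ((le_abs_self _).trans (hd1 k)) zero_le_one⟩
  have hneg : ∀ k, 0 ≤ d⁻ k ∧ d⁻ k ≤ 1 := fun k =>
    ⟨negPart_nonneg _, sup_le ((neg_le_abs _).trans (hd1 k)) zero_le_one⟩
  have hprod : d⁺ ᵥ* Q = d⁻ ᵥ* Q := by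
    rw [← sub_eq_zero, ← sub_vecMul, posPart_sub_negPart, hdQ]
  obtain ⟨π, -, hF, -⟩ := hQ _ _ (memFan_anchoredMatrix hKM hpos)
    (memFan_anchoredMatrix hKM hneg) (anchoredMatrix_mul_eq hprod)
  apply hd0
  rw [← posPart_sub_negPart d, eq_of_anchoredMatrix_cols hKM hF, sub_self]

end Anchored

theorem stmt8_general {M N : ℕ}
    (𝓜 : ∀ K : ℕ, Set (Matrix (Fin M) (Fin K) ℝ × Matrix (Fin K) (Fin N) ℝ))
    (hmem : ∀ (K : ℕ) (F : Matrix (Fin M) (Fin K) ℝ) (Q : Matrix (Fin K) (Fin N) ℝ),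
      (F, Q) ∈ 𝓜 K → 1 ≤ K ∧ memF F ∧ memQ Q)
    (h1 : ∀ (K : ℕ) (F : Matrix (Fin M) (Fin K) ℝ) (Q : Matrix (Fin K) (Fin N) ℝ),
      (F, Q) ∈ 𝓜 K → K < M)
    (h2 : ∀ (K : ℕ) (F : Matrix (Fin M) (Fin K) ℝ) (Q : Matrix (Fin K) (Fin N) ℝ),
      (F, Q) ∈ 𝓜 K → ∀ F' : Matrix (Fin M) (Fin K) ℝ, memFan F' → (F', Q) ∈ 𝓜 K) :
    Identifiable 𝓜 ↔
      ((∀ (K₁ K₂ : ℕ) (F1 : Matrix (Fin M) (Fin K₁) ℝ) (Q1 : Matrix (Fin K₁) (Fin N) ℝ)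
          (F2 : Matrix (Fin M) (Fin K₂) ℝ) (Q2 : Matrix (Fin K₂) (Fin N) ℝ),
          (F1, Q1) ∈ 𝓜 K₁ → (F2, Q2) ∈ 𝓜 K₂ → F1 * Q1 = F2 * Q2 →
          coneRows Q1 = coneRows Q2) ∧
        (∀ (K : ℕ) (F : Matrix (Fin M) (Fin K) ℝ) (Q : Matrix (Fin K) (Fin N) ℝ),
          (F, Q) ∈ 𝓜 K → LinearIndependent ℝ (fun k : Fin K => Q k))) := by
  constructor
  · intro hid
    refine ⟨fun K₁ K₂ F1 Q1 F2 Q2 hm1 hm2 hFQ =>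
      coneRows_eq_of_mequiv (hid _ _ _ _ _ _ hm1 hm2 hFQ), fun K F Q hm => ?_⟩
    exact linearIndependent_rows_of_anchored (h1 K F Q hm) fun F' F'' hF' hF'' =>
      hid K K F' Q F'' Q (h2 K F Q hm F' hF') (h2 K F Q hm F'' hF'')
  · rintro ⟨hcone, hli⟩ K₁ K₂ F1 Q1 F2 Q2 hm1 hm2 hFQ
    exact mequiv_of_coneRows_eq (hmem _ _ _ hm1).2.2.2 (hmem _ _ _ hm2).2.2.2 (hli _ _ _ hm1)
      (hli _ _ _ hm2) (hcone _ _ _ _ _ _ hm1 hm2 hFQ) hFQ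

/-- characterisation of identifiability for models closed under
replacing `F` by any element of `𝓕_{K(F)}^an`, with `K(F) < M`. -/
theorem stmt8 {M N : ℕ} (hM : 1 ≤ M) (hN : 1 ≤ N)
    (𝓜 : ∀ K : ℕ, Set (Matrix (Fin M) (Fin K) ℝ × Matrix (Fin K) (Fin N) ℝ))
    (hmem : ∀ (K : ℕ) (F : Matrix (Fin M) (Fin K) ℝ) (Q : Matrix (Fin K) (Fin N) ℝ),
      (F, Q) ∈ 𝓜 K → 1 ≤ K ∧ memF F ∧ memQ Q)
    (h1 : ∀ (K : ℕ) (F : Matrix (Fin M) (Fin K) ℝ) (Q : Matrix (Fin K) (Fin N) ℝ),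
      (F, Q) ∈ 𝓜 K → K < M)
    (h2 : ∀ (K : ℕ) (F : Matrix (Fin M) (Fin K) ℝ) (Q : Matrix (Fin K) (Fin N) ℝ),
      (F, Q) ∈ 𝓜 K → ∀ F' : Matrix (Fin M) (Fin K) ℝ, memFan F' → (F', Q) ∈ 𝓜 K) :
    Identifiable 𝓜 ↔
      ((∀ (K₁ K₂ : ℕ) (F1 : Matrix (Fin M) (Fin K₁) ℝ) (Q1 : Matrix (Fin K₁) (Fin N) ℝ)
          (F2 : Matrix (Fin M) (Fin K₂) ℝ) (Q2 : Matrix (Fin K₂) (Fin N) ℝ),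
          (F1, Q1) ∈ 𝓜 K₁ → (F2, Q2) ∈ 𝓜 K₂ → F1 * Q1 = F2 * Q2 →
          coneRows Q1 = coneRows Q2) ∧
        (∀ (K : ℕ) (F : Matrix (Fin M) (Fin K) ℝ) (Q : Matrix (Fin K) (Fin N) ℝ),
          (F, Q) ∈ 𝓜 K → LinearIndependent ℝ (fun k : Fin K => Q k))) :=
  stmt8_general 𝓜 hmem h1 h2
end

section
/- Suppose F¹ ∈ 𝓕_{K₁}^d, Q¹ ∈ 𝓠_{K₁}^ua, F² ∈ 𝓕_{K₂}^d, Q² ∈ 𝓠_{K₂}^ua and F¹Q¹ = F²Q². Then (F¹,Q¹) ∼ (F²,Q²); in particular K₁ = K₂ and there is a permutation π of {1,…,K₁} with F²_{⋆k} = F¹_{⋆π(k)} and Q²_{k⋆} = Q¹_{π(k)⋆} for all k. -/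
open Matrix BigOperators

/-- if `F¹ ∈ 𝓕_{K₁}^d`, `Q¹ ∈ 𝓠_{K₁}^ua`, `F² ∈ 𝓕_{K₂}^d`, `Q² ∈ 𝓠_{K₂}^ua`
and `F¹Q¹ = F²Q²`, then `K₁ = K₂` and `(F¹,Q¹) ∼ (F²,Q²)`. -/
theorem stmt9 {M N K₁ K₂ : ℕ} (hM : 1 ≤ M) (hN : 1 ≤ N) (hK₁ : 1 ≤ K₁) (hK₂ : 1 ≤ K₂)
    (F1 : Matrix (Fin M) (Fin K₁) ℝ) (Q1 : Matrix (Fin K₁) (Fin N) ℝ)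
    (F2 : Matrix (Fin M) (Fin K₂) ℝ) (Q2 : Matrix (Fin K₂) (Fin N) ℝ)
    (hF1 : memFd F1) (hQ1 : memQua Q1) (hF2 : memFd F2) (hQ2 : memQua Q2)
    (hprod : F1 * Q1 = F2 * Q2) :
    K₁ = K₂ ∧ MEquiv F1 Q1 F2 Q2 := by
  obtain ⟨hF1F, hF1d⟩ := hF1
  obtain ⟨hQ1Q, hQ1col, hQ1all⟩ := hQ1
  obtain ⟨hF2F, hF2d⟩ := hF2
  obtain ⟨hQ2Q, hQ2col, hQ2all⟩ := hQ2
  choose c1 hc1 using hQ1col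
  choose c2 hc2 using hQ2col
  have key : ∀ i s, F1 s (c1 i) = F2 s (c2 i) := by
    intro i s
    have h := congrFun (congrFun hprod s) i
    simp only [Matrix.mul_apply] at h
    calc F1 s (c1 i) = ∑ k, F1 s k * Q1 k i := by
          rw [Finset.sum_congr rfl (fun k _ => by rw [hc1 i k])]
          simp
      _ = ∑ k, F2 s k * Q2 k i := h
      _ = F2 s (c2 i) := by
          rw [Finset.sum_congr rfl (fun k _ => by rw [hc2 i k])]
          simp
  have ceq : ∀ {K' : ℕ} (Q : Matrix (Fin K') (Fin N) ℝ) (c : Fin N → Fin K'),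
      (∀ i l, Q l i = if l = c i then 1 else 0) → ∀ (i : Fin N) (k : Fin K'),
      (∀ l, Q l i = if l = k then (1:ℝ) else 0) → c i = k := by
    intro K' Q c hc i k h
    by_contra hne
    have h1 := h k
    rw [if_pos rfl] at h1
    have h2 := hc i k
    rw [if_neg (fun hh => hne hh.symm), h1] at h2
    exact one_ne_zero h2
  choose a2 ha2 using hQ2all
  choose a1 ha1 using hQ1all
  set π : Fin K₂ → Fin K₁ := fun k => c1 (a2 k) with hπ
  have hF2F1 : ∀ (k : Fin K₂) (s : Fin M), F2 s k = F1 s (π k) := by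
    intro k s
    have hc2k : c2 (a2 k) = k := ceq Q2 c2 hc2 (a2 k) k (ha2 k)
    have h := key (a2 k) s
    rw [hc2k] at h
    exact h.symm
  have hinj : Function.Injective π := by
    intro k k' h
    exact hF2d k k' (fun s => by rw [hF2F1 k s, hF2F1 k' s, h])
  have hsurj : Function.Surjective π := by
    intro k₁
    have hc1k : c1 (a1 k₁) = k₁ := ceq Q1 c1 hc1 (a1 k₁) k₁ (ha1 k₁)
    refine ⟨c2 (a1 k₁), ?_⟩
    apply hF1d
    intro s
    rw [← hF2F1 (c2 (a1 k₁)) s]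
    have h := key (a1 k₁) s
    rw [hc1k] at h
    exact h.symm
  have hπc : ∀ i, π (c2 i) = c1 i := by
    intro i
    apply hF1d
    intro s
    rw [← hF2F1 (c2 i) s]
    exact (key i s).symm
  have hQeq : ∀ (k : Fin K₂) (i : Fin N), Q2 k i = Q1 (π k) i := by
    intro k i
    rw [hc2 i k, hc1 i (π k), ← hπc i]
    by_cases h : k = c2 i
    · subst h; simp
    · rw [if_neg h, if_neg (fun hh => h (hinj hh))]
  have hK : K₁ = K₂ := by
    have := Fintype.card_of_bijective (⟨hinj, hsurj⟩ : Function.Bijective π)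
    simpa using this.symm
  exact ⟨hK, π, ⟨hinj, hsurj⟩, hF2F1, hQeq⟩
end

section
/- Let K ≥ 2 and N > K. Let F ∈ 𝓕_K be a matrix having at least two identical columns. Then there exist Q¹, Q² ∈ 𝓠_K^ua such that FQ¹ = FQ² but (F,Q¹) is not equivalent to (F,Q²). -/
open Matrix BigOperators

/-- Auxiliary: the `Q` matrix whose column `i` is `e_{g i}`. -/
def Qof {K N : ℕ} (g : Fin N → Fin K) : Matrix (Fin K) (Fin N) ℝ :=
  Matrix.of fun m i => if m = g i then 1 else 0

lemma memQua_Qof {K N : ℕ} (g : Fin N → Fin K) (hg : Function.Surjective g) :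
    memQua (Qof g) := by
  refine ⟨⟨fun m i => by unfold Qof; dsimp; positivity, fun i => by simp [Qof]⟩,
    fun i => ⟨g i, fun m => rfl⟩, fun m => ?_⟩
  obtain ⟨i, hi⟩ := hg m
  exact ⟨i, fun n => by simp [Qof, hi]⟩

lemma mul_Qof {M K N : ℕ} (F : Matrix (Fin M) (Fin K) ℝ) (g : Fin N → Fin K)
    (s : Fin M) (i : Fin N) : (F * Qof g) s i = F s (g i) := by
  simp [Matrix.mul_apply, Qof]

/-- if `K ≥ 2`, `N > K` and `F ∈ 𝓕_K` has two identical columns, there are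
`Q¹, Q² ∈ 𝓠_K^ua` with `FQ¹ = FQ²` but `(F,Q¹) ≁ (F,Q²)`. -/
theorem stmt10 {M N K : ℕ} (hM : 1 ≤ M) (hK : 2 ≤ K) (hN : K < N)
    (F : Matrix (Fin M) (Fin K) ℝ) (hF : memF F)
    (k l : Fin K) (hkl : k ≠ l) (hcols : ∀ s, F s k = F s l) :
    ∃ Q1 Q2 : Matrix (Fin K) (Fin N) ℝ, memQua Q1 ∧ memQua Q2 ∧
      F * Q1 = F * Q2 ∧ ¬ MEquiv F Q1 F Q2 := by
  have hKN : K ≤ N := le_of_lt hN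
  set g1 : Fin N → Fin K := fun i => if h : i.val < K then ⟨i.val, h⟩ else k with hg1
  set g2 : Fin N → Fin K := fun i => if h : i.val < K then ⟨i.val, h⟩ else l with hg2
  have hsurj : ∀ g : Fin N → Fin K, (g = g1 ∨ g = g2) → Function.Surjective g := by
    rintro g (rfl | rfl) <;> intro m <;>
      exact ⟨⟨m.val, lt_of_lt_of_le m.isLt hKN⟩, by simp [hg1, hg2, m.isLt, Fin.ext_iff]⟩
  refine ⟨Qof g1, Qof g2, memQua_Qof g1 (hsurj g1 (Or.inl rfl)),
    memQua_Qof g2 (hsurj g2 (Or.inr rfl)), ?_, ?_⟩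
  · ext s i
    rw [mul_Qof, mul_Qof]
    by_cases h : i.val < K
    · simp [hg1, hg2, h]
    · simp only [hg1, hg2, dif_neg h]
      exact hcols s
  · rintro ⟨π, hbij, hFπ, hQπ⟩
    have h1 := hQπ l ⟨K, hN⟩
    have h2 := hQπ l ⟨l.val, lt_of_lt_of_le l.isLt hKN⟩
    have hg1i0 : g1 ⟨K, hN⟩ = k := by simp [hg1]
    have hg2i0 : g2 ⟨K, hN⟩ = l := by simp [hg2]
    have hj1 : g1 ⟨l.val, lt_of_lt_of_le l.isLt hKN⟩ = l := by
      simp [hg1, l.isLt, Fin.ext_iff]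
    have hj2 : g2 ⟨l.val, lt_of_lt_of_le l.isLt hKN⟩ = l := by
      simp [hg2, l.isLt, Fin.ext_iff]
    have hπl : π l = k := by
      by_contra hne
      simp [Qof, hg1i0, hg2i0, hne] at h1
    rw [hπl] at h2
    simp only [Qof, Matrix.of_apply, hj1, hj2, if_pos rfl] at h2
    rw [if_neg hkl] at h2
    exact one_ne_zero h2
end

section
/- Let K ≥ 2 and N ≥ 1. Let Q ∈ 𝓠_K be such that every column of Q is a standard basis vector of ℝ^K, but for some k ∈ {1,…,K} the vector e_k is not a column of Q (so Q ∉ 𝓠_K^ua). Then for every F ∈ 𝓕_K^d there exists F² ∈ 𝓕_K^d with FQ = F²Q but (F,Q) not equivalent to (F²,Q). -/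
open Matrix BigOperators

/-- if every column of `Q ∈ 𝓠_K` is a standard basis vector but `e_k` does
not occur as a column, then for every `F ∈ 𝓕_K^d` there is `F² ∈ 𝓕_K^d` with `FQ = F²Q`
but `(F,Q) ≁ (F²,Q)`. -/
theorem stmt11 {M N K : ℕ} (hM : 1 ≤ M) (hN : 1 ≤ N) (hK : 2 ≤ K)
    (Q : Matrix (Fin K) (Fin N) ℝ) (hQ : memQ Q)
    (hcols : ∀ i, ∃ k, ∀ l, Q l i = if l = k then (1 : ℝ) else 0)
    (k : Fin K) (hk : ¬ isColE Q k) :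
    ∀ F : Matrix (Fin M) (Fin K) ℝ, memFd F →
      ∃ F2 : Matrix (Fin M) (Fin K) ℝ, memFd F2 ∧ F * Q = F2 * Q ∧ ¬ MEquiv F Q F2 Q := by
  intro F hF
  -- row k of Q is zero
  have hQk : ∀ j, Q k j = 0 := by
    intro j
    obtain ⟨c, hc⟩ := hcols j
    have hck : c ≠ k := by
      intro h
      exact hk ⟨j, by simpa [h] using hc⟩
    simpa [hc k, Ne.symm hck] using hc k
  -- pick a value c ∈ [0,1] not among the entries of row s0 of F
  have hs0 : 0 < M := hM
  set s0 : Fin M := ⟨0, hs0⟩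
  have hinf : (Set.Icc (0:ℝ) 1).Infinite := Set.Icc_infinite (by norm_num)
  obtain ⟨c, hcIcc, hcS⟩ :=
    hinf.exists_notMem_finset (Finset.image (fun l => F s0 l) Finset.univ)
  have hcne : ∀ l, c ≠ F s0 l := by
    intro l h
    exact hcS (Finset.mem_image.2 ⟨l, Finset.mem_univ l, h.symm⟩)
  set F2 : Matrix (Fin M) (Fin K) ℝ :=
    Matrix.of (fun s l => if l = k then c else F s l) with hF2def
  have hF2app : ∀ s l, F2 s l = if l = k then c else F s l := fun s l => rfl
  refine ⟨F2, ⟨?_, ?_⟩, ?_, ?_⟩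
  · intro s l
    rw [hF2app]
    by_cases h : l = k
    · simp [h, hcIcc.1, hcIcc.2]
    · simp [h, (hF.1 s l).1, (hF.1 s l).2]
  · intro a b hab
    by_cases ha : a = k <;> by_cases hb : b = k
    · rw [ha, hb]
    · exact absurd ((by simpa [hF2app, ha, hb] using hab s0 : c = F s0 b)) (hcne b)
    · exact absurd ((by simpa [hF2app, ha, hb] using (hab s0).symm : c = F s0 a)) (hcne a)
    · exact hF.2 a b (fun s => by simpa [hF2app, ha, hb] using hab s)
  · ext s j
    simp only [Matrix.mul_apply]
    apply Finset.sum_congr rfl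
    intro l _
    by_cases h : l = k
    · simp [h, hQk j]
    · simp [hF2app, h]
  · rintro ⟨π, hbij, hFe, hQe⟩
    have hfix : ∀ l, l ≠ k → π l = l := by
      intro l hl
      refine hF.2 (π l) l (fun s => ?_)
      have := hFe l s
      rw [hF2app, if_neg hl] at this
      exact this.symm
    have hπk : π k = k := by
      by_contra h
      have := hfix (π k) h
      have : π (π k) = π k := this
      have hkk : π k = k := hbij.1 this
      exact h hkk
    have := hFe k s0
    rw [hF2app, if_pos rfl, hπk] at this
    exact hcne k this
end

section
/- Let V be a real vector space, v₁, …, v_m ∈ V, let C be the convex hull of {v₁, …, v_m} and C° the open convex hull (the set of all combinations λ₁v₁+…+λ_m v_m with all λᵢ > 0 and Σᵢλᵢ = 1). Then the following are equivalent: (i) some element of C fails to have a unique convex combination of v₁, …, v_m; (ii) every element of C° fails to have a unique convex combination of v₁, …, v_m; (iii) every element of C° has infinitely many convex combinations of v₁, …, v_m (infinitely many coefficient vectors representing it). -/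
open BigOperators

/-- `x` has a unique convex combination in terms of `v 1, …, v m`. -/
def UniqueConvComb {V : Type*} [AddCommGroup V] [Module ℝ V] {m : ℕ}
    (v : Fin m → V) (x : V) : Prop :=
  ∀ lam mu : Fin m → ℝ, (∀ i, 0 ≤ lam i) → (∀ i, 0 ≤ mu i) →
    ∑ i, lam i = 1 → ∑ i, mu i = 1 →
    x = ∑ i, lam i • v i → x = ∑ i, mu i • v i → lam = mu

/-- The open convex hull generated by `v 1, …, v m`: all combinations with all
coefficients strictly positive. -/
def openHull {V : Type*} [AddCommGroup V] [Module ℝ V] {m : ℕ} (v : Fin m → V) : Set V :=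
  {x | ∃ lam : Fin m → ℝ, (∀ i, 0 < lam i) ∧ ∑ i, lam i = 1 ∧ x = ∑ i, lam i • v i}

/-- `x` is an extreme point of the convex set `C`: it is not a nontrivial convex
combination of two distinct points of `C`. -/
def IsExtremePt {V : Type*} [AddCommGroup V] [Module ℝ V] (C : Set V) (x : V) : Prop :=
  ¬ ∃ y ∈ C, ∃ z ∈ C, y ≠ z ∧ ∃ α : ℝ, 0 < α ∧ α < 1 ∧ x = α • y + (1 - α) • z

/-- The wedge generated by `A`: all finite nonnegative linear combinations of elements
of `A`. -/
def wedge {V : Type*} [AddCommGroup V] [Module ℝ V] (A : Set V) : Set V :=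
  {x | ∃ (n : ℕ) (α : Fin n → ℝ) (y : Fin n → V),
    (∀ i, 0 ≤ α i) ∧ (∀ i, y i ∈ A) ∧ x = ∑ i, α i • y i}

/-- `x ∈ we(A)` has a unique decomposition in terms of `A`. -/
def UniqueWedgeDecomp {V : Type*} [AddCommGroup V] [Module ℝ V] (A : Set V) (x : V) : Prop :=
  ∀ (n : ℕ) (y : Fin n → V), Function.Injective y → (∀ i, y i ∈ A) →
    ∀ α β : Fin n → ℝ, (∀ i, 0 ≤ α i) → (∀ i, 0 ≤ β i) →
      x = ∑ i, α i • y i → x = ∑ i, β i • y i → α = β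

section Aux
variable {V : Type*} [AddCommGroup V] [Module ℝ V] {m : ℕ}

lemma exists_diff_of_not_unique {v : Fin m → V} {x : V} (h : ¬ ∀ lam mu : Fin m → ℝ, (∀ i, 0 ≤ lam i) → (∀ i, 0 ≤ mu i) →
    ∑ i, lam i = 1 → ∑ i, mu i = 1 →
    x = ∑ i, lam i • v i → x = ∑ i, mu i • v i → lam = mu) :
    ∃ d : Fin m → ℝ, d ≠ 0 ∧ ∑ i, d i = 0 ∧ ∑ i, d i • v i = 0 := by
  push_neg at h
  obtain ⟨lam, mu, h1, h2, h3, h4, h5, h6, hne⟩ := h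
  refine ⟨lam - mu, sub_ne_zero.mpr hne, ?_, ?_⟩
  · simp [Pi.sub_apply, Finset.sum_sub_distrib, h3, h4]
  · simp only [Pi.sub_apply, sub_smul, Finset.sum_sub_distrib, ← h5, ← h6, sub_self]

lemma infinite_of_diff (hm : 1 ≤ m) {v : Fin m → V}
    {d : Fin m → ℝ} (hd0 : d ≠ 0) (hds : ∑ i, d i = 0) (hdv : ∑ i, d i • v i = 0)
    {x : V} {lam : Fin m → ℝ} (hpos : ∀ i, 0 < lam i) (hsum : ∑ i, lam i = 1)
    (hxe : x = ∑ i, lam i • v i) :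
    {c : Fin m → ℝ | (∀ i, 0 ≤ c i) ∧ ∑ i, c i = 1 ∧ x = ∑ i, c i • v i}.Infinite := by
  haveI : Nonempty (Fin m) := ⟨⟨0, hm⟩⟩
  set ε : ℝ := Finset.univ.inf' Finset.univ_nonempty (fun i => lam i / (|d i| + 1)) with hε
  have hεpos : 0 < ε := by
    rw [hε, Finset.lt_inf'_iff]
    intro i _
    have := hpos i
    positivity
  have key : ∀ t : ℝ, 0 < t → t ≤ ε → (lam + t • d) ∈
      {c : Fin m → ℝ | (∀ i, 0 ≤ c i) ∧ ∑ i, c i = 1 ∧ x = ∑ i, c i • v i} := by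
    intro t ht htε
    refine ⟨fun i => ?_, ?_, ?_⟩
    · have h1 : ε ≤ lam i / (|d i| + 1) := Finset.inf'_le _ (Finset.mem_univ i)
      have h2 : ε * (|d i| + 1) ≤ lam i := by
        rw [← le_div_iff₀ (by positivity)]; exact h1
      have h3 : -|d i| ≤ d i := neg_abs_le _
      have h4 : (0:ℝ) ≤ |d i| := abs_nonneg _
      simp only [Pi.add_apply, Pi.smul_apply, smul_eq_mul]
      nlinarith
    · simp only [Pi.add_apply, Pi.smul_apply, smul_eq_mul, Finset.sum_add_distrib,
        ← Finset.mul_sum, hds, hsum, mul_zero, add_zero]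
    · simp only [Pi.add_apply, Pi.smul_apply, smul_eq_mul, add_smul, mul_smul,
        Finset.sum_add_distrib, ← Finset.smul_sum, hdv, smul_zero, add_zero, hxe]
  apply Set.infinite_of_injective_forall_mem
    (f := fun n : ℕ => lam + (ε / (n + 1)) • d)

  · intro n n' hnn'
    obtain ⟨i, hi⟩ := Function.ne_iff.mp hd0
    have hi' : d i ≠ 0 := hi
    have heq := congrFun hnn' i
    simp only [Pi.add_apply, Pi.smul_apply, smul_eq_mul] at heq
    have h5 : ε / (↑n + 1) = ε / (↑n' + 1) :=
      mul_right_cancel₀ hi' (add_left_cancel heq)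
    have hn : ((n:ℝ) + 1) ≠ 0 := by positivity
    have hn' : ((n':ℝ) + 1) ≠ 0 := by positivity
    rw [div_eq_div_iff hn hn'] at h5
    have h6 : ((n:ℝ) + 1) = (n':ℝ) + 1 :=
      mul_left_cancel₀ (ne_of_gt hεpos) (by linarith)
    have : (n:ℝ) = n' := by linarith
    exact_mod_cast this
  · intro n
    apply key
    · positivity
    · apply div_le_self hεpos.le
      have : (0:ℝ) ≤ n := Nat.cast_nonneg n
      linarith


lemma not_unique_of_infinite {v : Fin m → V} {x : V}
    (h : {c : Fin m → ℝ | (∀ i, 0 ≤ c i) ∧ ∑ i, c i = 1 ∧ x = ∑ i, c i • v i}.Infinite) :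
    ¬ UniqueConvComb v x := by
  obtain ⟨a, ha, b, hb, hab⟩ := h.nontrivial
  intro hU
  exact hab (hU a b ha.1 hb.1 ha.2.1 hb.2.1 ha.2.2 hb.2.2)

lemma exists_diff_of_not_unique' {v : Fin m → V} {x : V} (h : ¬ UniqueConvComb v x) :
    ∃ d : Fin m → ℝ, d ≠ 0 ∧ ∑ i, d i = 0 ∧ ∑ i, d i • v i = 0 := by
  unfold UniqueConvComb at h
  exact exists_diff_of_not_unique h

end Aux

/-- (i) some element of the convex hull lacks a unique convex combination
iff (ii) every element of the open hull lacks one, iff (iii) every element of the open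
hull has infinitely many convex combinations. -/
theorem stmt14 {V : Type*} [AddCommGroup V] [Module ℝ V] {m : ℕ} (hm : 1 ≤ m)
    (v : Fin m → V) :
    ((∃ x ∈ convexHull ℝ (Set.range v), ¬ UniqueConvComb v x) ↔
        ∀ x ∈ openHull v, ¬ UniqueConvComb v x) ∧
      ((∀ x ∈ openHull v, ¬ UniqueConvComb v x) ↔
        ∀ x ∈ openHull v,
          {c : Fin m → ℝ | (∀ i, 0 ≤ c i) ∧ ∑ i, c i = 1 ∧ x = ∑ i, c i • v i}.Infinite) := by
  have hm0 : (0:ℝ) < m := by exact_mod_cast hm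
  have hsum1 : ∑ _i : Fin m, (m:ℝ)⁻¹ = 1 := by
    simp [Finset.sum_const, Finset.card_univ, nsmul_eq_mul]
    exact mul_inv_cancel₀ (ne_of_gt hm0)
  have hx0open : (∑ i, (m:ℝ)⁻¹ • v i) ∈ openHull v :=
    ⟨fun _ => (m:ℝ)⁻¹, fun _ => inv_pos.mpr hm0, hsum1, rfl⟩
  have hx0C : (∑ i, (m:ℝ)⁻¹ • v i) ∈ convexHull ℝ (Set.range v) := by
    exact (convex_convexHull ℝ (Set.range v)).sum_mem
      (fun i _ => inv_nonneg.mpr hm0.le) hsum1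
      (fun i _ => subset_convexHull ℝ _ (Set.mem_range_self i))
  have main : (∃ x ∈ convexHull ℝ (Set.range v), ¬ UniqueConvComb v x) →
      ∀ x ∈ openHull v,
        {c : Fin m → ℝ | (∀ i, 0 ≤ c i) ∧ ∑ i, c i = 1 ∧ x = ∑ i, c i • v i}.Infinite := by
    rintro ⟨y, _, hy⟩ x ⟨lam, hpos, hsum, hxe⟩
    obtain ⟨d, hd0, hds, hdv⟩ := exists_diff_of_not_unique' hy
    exact infinite_of_diff hm hd0 hds hdv hpos hsum hxe
  refine ⟨⟨fun h x hx => not_unique_of_infinite (main h x hx),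
      fun h => ⟨_, hx0C, h _ hx0open⟩⟩,
    ⟨fun h x hx => ?_, fun h x hx => not_unique_of_infinite (h x hx)⟩⟩
  obtain ⟨lam, hpos, hsum, hxe⟩ := hx
  obtain ⟨d, hd0, hds, hdv⟩ := exists_diff_of_not_unique' (h x ⟨lam, hpos, hsum, hxe⟩)
  exact infinite_of_diff hm hd0 hds hdv hpos hsum hxe
end

section
/- Let K be a cone in a real vector space (i.e. K is closed under addition and under multiplication by nonnegative scalars, and K ∩ (−K) = {0}) that is generated as a wedge by two minimal sets A and B, so K = we(A) = we(B) with A and B each minimal. Then for every x ∈ A there exists α > 0 with αx ∈ B, and for every y ∈ B there exists β > 0 with βy ∈ A. -/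
open BigOperators

/-! A generator `x` of a minimal generating set `A` of a salient cone `K` spans an extreme ray:
if `u + v = x` with `u, v ∈ K`, write `u = a • x + r` and `v = b • x + s` with `r, s` in the cone
generated by `A \ {x}`. If `a + b < 1`, then `x` itself lies in that smaller cone, contradicting
minimality; if `a + b ≥ 1`, then `(a + b - 1) • x + (r + s) = 0`, and salience gives `r = s = 0`.
Expanding `x` as a nonnegative combination of elements of `B`, every term is therefore a
nonnegative multiple of `x`, and a nonzero term exhibits a positive multiple of `x` in `B`. -/

open Submodule PointedCone

theorem Submodule.notMem_span_sdiff_singleton {R M : Type*} [Semiring R] [AddCommMonoid M]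
    [Module R M] {s : Set M} {x : M} (hx : x ∈ s) (hmin : span R (s \ {x}) ≠ span R s) :
    x ∉ span R (s \ {x}) := fun h ↦
  hmin (by conv_rhs => rw [← Set.insert_sdiff_self_of_mem hx, span_insert_eq_span h])

section

variable {𝕜 V : Type*} [Field 𝕜] [LinearOrder 𝕜] [IsStrictOrderedRing 𝕜]
  [AddCommGroup V] [Module 𝕜 V]

theorem PointedCone.eq_zero_of_add_eq_zero {K : PointedCone 𝕜 V} (hK : (K : Set V) ∩ -K = {0})
    {u v : V} (hu : u ∈ K) (hv : v ∈ K) (h : u + v = 0) : u = 0 := by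
  have hneg : -u ∈ K := by rwa [neg_eq_of_add_eq_zero_right h]
  exact hK.subset ⟨hu, hneg⟩

theorem PointedCone.mem_hull_singleton_of_add_eq {A : Set V} {x : V}
    (hK : (hull 𝕜 A : Set V) ∩ -(hull 𝕜 A) = {0}) (hx : x ∈ A) (hxA : x ∉ hull 𝕜 (A \ {x}))
    {u v : V} (hu : u ∈ hull 𝕜 A) (hv : v ∈ hull 𝕜 A) (huv : u + v = x) :
    u ∈ hull 𝕜 {x} := by
  have hLK : hull 𝕜 (A \ {x}) ≤ hull 𝕜 A := span_mono Set.sdiff_subset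
  have hA : hull 𝕜 A = hull 𝕜 (insert x (A \ {x})) := by rw [Set.insert_sdiff_self_of_mem hx]
  obtain ⟨a, r, hr, rfl⟩ := mem_span_insert.1 (hA ▸ hu)
  obtain ⟨b, s, hs, rfl⟩ := mem_span_insert.1 (hA ▸ hv)
  have hsum : ((a : 𝕜) + b) • x + (r + s) = x := by
    simp only [← Nonneg.coe_smul] at huv
    linear_combination (norm := module) huv
  rcases lt_or_ge ((a : 𝕜) + b) 1 with hlt | hge
  · have hx_eq : (1 - ((a : 𝕜) + b))⁻¹ • (r + s) = x := by
      rw [inv_smul_eq_iff₀ (sub_ne_zero.2 hlt.ne')]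
      linear_combination (norm := module) hsum
    have hmem := smul_mem _ (inv_nonneg.2 (sub_nonneg.2 hlt.le)) (add_mem hr hs)
    rw [hx_eq] at hmem
    exact absurd hmem hxA
  · have hrs : r + s = 0 := by
      refine eq_zero_of_add_eq_zero hK (add_mem (hLK hr) (hLK hs))
        (smul_mem _ (sub_nonneg.2 hge) (subset_hull hx)) ?_
      linear_combination (norm := module) hsum
    rw [eq_zero_of_add_eq_zero hK (hLK hr) (hLK hs) hrs, add_zero]
    exact Submodule.smul_mem _ a (mem_span_singleton_self x)

theorem PointedCone.exists_pos_smul_mem_of_hull_eq {A B : Set V} (hAB : hull 𝕜 A = hull 𝕜 B)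
    (hK : (hull 𝕜 A : Set V) ∩ -(hull 𝕜 A) = {0}) {x : V} (hx : x ∈ A)
    (hmin : hull 𝕜 (A \ {x}) ≠ hull 𝕜 A) : ∃ α : 𝕜, 0 < α ∧ α • x ∈ B := by
  have hxA := notMem_span_sdiff_singleton hx hmin
  have hx0 : x ≠ 0 := by
    rintro rfl
    exact hxA (zero_mem _)
  obtain ⟨n, f, g, hfg⟩ := mem_span_set'.1 (hAB ▸ subset_hull hx : x ∈ hull 𝕜 B)
  have hterm (i : Fin n) : f i • (g i : V) ∈ hull 𝕜 A :=
    hAB ▸ Submodule.smul_mem _ (f i) (subset_hull (g i).2)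
  obtain ⟨i, hi⟩ : ∃ i, f i • (g i : V) ≠ 0 := by
    by_contra! h
    exact hx0 (hfg ▸ Finset.sum_eq_zero fun i _ ↦ h i)
  obtain ⟨c, hc⟩ : ∃ c : {c : 𝕜 // 0 ≤ c}, c • x = f i • (g i : V) :=
    mem_span_singleton.1 <| mem_hull_singleton_of_add_eq hK hx hxA (hterm i)
      (sum_mem (t := Finset.univ.erase i) fun j _ ↦ hterm j)
      ((Finset.add_sum_erase _ _ (Finset.mem_univ i)).trans hfg)
  have hf : (f i : 𝕜) ≠ 0 := fun h ↦ hi (by rw [← Nonneg.coe_smul, h, zero_smul])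
  have hc0 : (c : 𝕜) ≠ 0 := fun h ↦ hi (by rw [← hc, ← Nonneg.coe_smul, h, zero_smul])
  refine ⟨(f i : 𝕜)⁻¹ * c, mul_pos (inv_pos.2 ((f i).2.lt_of_ne' hf)) (c.2.lt_of_ne' hc0), ?_⟩
  rw [mul_smul, Nonneg.coe_smul, hc, ← Nonneg.coe_smul, inv_smul_smul₀ hf]
  exact (g i).2

end

theorem wedge_eq_hull {V : Type*} [AddCommGroup V] [Module ℝ V] (A : Set V) :
    wedge A = hull ℝ A := by
  ext x
  rw [SetLike.mem_coe, mem_span_set']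
  constructor
  · rintro ⟨n, α, y, hα, hy, rfl⟩
    exact ⟨n, fun i ↦ ⟨α i, hα i⟩, fun i ↦ ⟨y i, hy i⟩, rfl⟩
  · rintro ⟨n, f, g, rfl⟩
    exact ⟨n, fun i ↦ f i, fun i ↦ g i, fun i ↦ (f i).2, fun i ↦ (g i).2, rfl⟩

/-- if a cone is generated by two minimal sets `A` and `B`, then `A` and
`B` agree up to positive scalars. -/
theorem stmt19 {V : Type*} [AddCommGroup V] [Module ℝ V] (A B : Set V)
    (hAB : wedge A = wedge B)
    (hcone : wedge A ∩ -(wedge A) = {0})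
    (hminA : ∀ x ∈ A, wedge (A \ {x}) ≠ wedge A)
    (hminB : ∀ y ∈ B, wedge (B \ {y}) ≠ wedge B) :
    (∀ x ∈ A, ∃ α : ℝ, 0 < α ∧ α • x ∈ B) ∧ (∀ y ∈ B, ∃ β : ℝ, 0 < β ∧ β • y ∈ A) := by
  simp only [wedge_eq_hull, Ne, SetLike.coe_set_eq] at hAB hcone hminA hminB
  exact ⟨fun x hx ↦ exists_pos_smul_mem_of_hull_eq hAB hcone hx (hminA x hx),
    fun y hy ↦ exists_pos_smul_mem_of_hull_eq hAB.symm (hAB ▸ hcone) hy (hminB y hy)⟩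
end
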